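/- arXiv:2108.02914 — 7 statements merged into one kernel-verified Lean document; each statement's English description precedes it below -/
import Mathlib

section
/- Every nonzero skew-symmetric n×n integer matrix M is congruent over ℤ (i.e. there exists U ∈ GL(n,ℤ) with UᵀMU in the stated form) to a block-diagonal matrix consisting of k 2×2 blocks of the form [[0, λᵢ],[-λᵢ, 0]] with nonzero integers λᵢ, followed by a zero block; in particular rank M = 2k. -/
/-- The normal form for skew-symmetric integer matrices: `k` diagonally placed `2×2` blocks
`[[0, λᵢ], [-λᵢ, 0]]` followed by a zero block. -/
def skewNormalForm (n k : ℕ) (lam : Fin k → ℤ) : Matrix (Fin n) (Fin n) ℤ :=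
  Matrix.of fun i j =>
    if h : i.val < 2 * k ∧ j.val < 2 * k then
      if j.val = i.val + 1 ∧ i.val % 2 = 0 then lam ⟨i.val / 2, by omega⟩
      else if i.val = j.val + 1 ∧ j.val % 2 = 0 then -lam ⟨j.val / 2, by omega⟩
      else 0
    else 0

open Matrix
namespace SkewNF
variable {n : ℕ}

def Bf (M : Matrix (Fin n) (Fin n) ℤ) (x y : Fin n → ℤ) : ℤ := x ⬝ᵥ (M *ᵥ y)

lemma Bf_skew {M : Matrix (Fin n) (Fin n) ℤ} (hM : Mᵀ = -M) (x y : Fin n → ℤ) :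
    Bf M y x = -Bf M x y := by
  simp only [Bf]
  rw [dotProduct_mulVec, ← mulVec_transpose, hM, neg_mulVec, neg_dotProduct, dotProduct_comm]

lemma Bf_self {M : Matrix (Fin n) (Fin n) ℤ} (hM : Mᵀ = -M) (x : Fin n → ℤ) :
    Bf M x x = 0 := by
  have := Bf_skew hM x x; omega

lemma Bf_add_left (M : Matrix (Fin n) (Fin n) ℤ) (x x' y : Fin n → ℤ) :
    Bf M (x + x') y = Bf M x y + Bf M x' y := by simp [Bf, add_dotProduct]

lemma Bf_smul_left (M : Matrix (Fin n) (Fin n) ℤ) (c : ℤ) (x y : Fin n → ℤ) :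
    Bf M (c • x) y = c * Bf M x y := by simp [Bf, dotProduct, mulVec, Finset.mul_sum, mul_assoc]

lemma Bf_sub_left (M : Matrix (Fin n) (Fin n) ℤ) (x x' y : Fin n → ℤ) :
    Bf M (x - x') y = Bf M x y - Bf M x' y := by simp [Bf, sub_dotProduct]

lemma Bf_add_right (M : Matrix (Fin n) (Fin n) ℤ) (x y y' : Fin n → ℤ) :
    Bf M x (y + y') = Bf M x y + Bf M x y' := by simp [Bf, mulVec_add, dotProduct_add]

lemma Bf_smul_right (M : Matrix (Fin n) (Fin n) ℤ) (c : ℤ) (x y : Fin n → ℤ) :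
    Bf M x (c • y) = c * Bf M x y := by
  simp [Bf, dotProduct, mulVec, Finset.mul_sum, mul_assoc, mul_left_comm]

lemma Bf_sub_right (M : Matrix (Fin n) (Fin n) ℤ) (x y y' : Fin n → ℤ) :
    Bf M x (y - y') = Bf M x y - Bf M x y' := by simp [Bf, mulVec_sub, dotProduct_sub]

lemma congr_apply (M U : Matrix (Fin n) (Fin n) ℤ) (s t : Fin n) :
    (Uᵀ * M * U) s t = Bf M (fun a => U a s) (fun a => U a t) := by
  simp only [Bf, mul_apply, dotProduct, mulVec, transpose_apply, Finset.sum_mul, Finset.mul_sum]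
  rw [Finset.sum_comm]
  congr 1; ext a; congr 1; ext b; ring

lemma step (M : Matrix (Fin n) (Fin n) ℤ) (hM : Mᵀ = -M) (hM0 : M ≠ 0) :
    ∃ (m : ℕ) (_ : 2 + m = n) (σ : Fin 2 ⊕ Fin m ≃ Fin n),
      (∀ a : Fin 2, (σ (Sum.inl a)).val = a.val) ∧
      (∀ i : Fin m, (σ (Sum.inr i)).val = 2 + i.val) ∧
      ∃ (d : ℤ) (N : Matrix (Fin m) (Fin m) ℤ) (P : Matrix (Fin n) (Fin n) ℤ),
        d ≠ 0 ∧ Nᵀ = -N ∧ IsUnit P.det ∧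
        Pᵀ * M * P = Matrix.reindex σ σ (Matrix.fromBlocks !![0, d; -d, 0] 0 0 N) := by
  classical
  -- a nonzero value of the form
  obtain ⟨i0, j0, hij⟩ : ∃ i j, M i j ≠ 0 := by
    by_contra h; push_neg at h; exact hM0 (by ext i j; simpa using h i j)
  have hBij : Bf M (Pi.single i0 1) (Pi.single j0 1) = M i0 j0 := by
    simp [Bf, dotProduct, mulVec, Pi.single_apply]
  set T : Set ℕ := {t | ∃ x y, Bf M x y ≠ 0 ∧ (Bf M x y).natAbs = t} with hT
  have hTne : T.Nonempty := ⟨(M i0 j0).natAbs, Pi.single i0 1, Pi.single j0 1, by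
    rw [hBij]; exact hij, by rw [hBij]⟩
  obtain ⟨e0, f, hBe0, hBabs⟩ := Nat.sInf_mem hTne
  set D : ℕ := sInf T with hD
  have hmin : ∀ x y, Bf M x y ≠ 0 → (D : ℤ) ≤ |Bf M x y| := by
    intro x y h
    have := Nat.sInf_le (show (Bf M x y).natAbs ∈ T from ⟨x, y, h, rfl⟩)
    rw [Int.abs_eq_natAbs]; exact_mod_cast this
  set d : ℤ := (D : ℤ) with hd'
  have hdpos : 0 < d := by
    have : D ≠ 0 := by
      intro h; rw [h] at hBabs; exact hBe0 (Int.natAbs_eq_zero.mp hBabs)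
    simp only [hd']; exact_mod_cast Nat.pos_of_ne_zero this
  obtain ⟨e, hd⟩ : ∃ e, Bf M e f = d := by
    rcases le_or_gt 0 (Bf M e0 f) with h | h
    · exact ⟨e0, by rw [hd', ← hBabs, Int.natAbs_of_nonneg h]⟩
    · refine ⟨-e0, ?_⟩
      have : Bf M (-e0) f = -Bf M e0 f := by
        have := Bf_sub_left M 0 e0 f
        simpa [Bf, dotProduct] using this
      rw [this, hd', ← hBabs, Int.ofNat_natAbs_of_nonpos h.le]
  have hdvd1 : ∀ x, d ∣ Bf M x f := by
    intro x; by_contra hnd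
    have h1 : Bf M (x - (Bf M x f / d) • e) f = Bf M x f % d := by
      rw [Bf_sub_left, Bf_smul_left, hd, Int.emod_def]; ring
    have h2 : Bf M x f % d ≠ 0 := fun h => hnd (Int.dvd_of_emod_eq_zero h)
    have h3 := hmin _ _ (h1 ▸ h2)
    rw [h1, abs_of_nonneg (Int.emod_nonneg _ hdpos.ne')] at h3
    have h5 : Bf M x f % d < d := Int.emod_lt_of_pos _ hdpos
    omega
  have hdvd2 : ∀ y, d ∣ Bf M e y := by
    intro y; by_contra hnd
    have h1 : Bf M e (y - (Bf M e y / d) • f) = Bf M e y % d := by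
      rw [Bf_sub_right, Bf_smul_right, hd, Int.emod_def]; ring
    have h2 : Bf M e y % d ≠ 0 := fun h => hnd (Int.dvd_of_emod_eq_zero h)
    have h3 := hmin _ _ (h1 ▸ h2)
    rw [h1, abs_of_nonneg (Int.emod_nonneg _ hdpos.ne')] at h3
    have h5 : Bf M e y % d < d := Int.emod_lt_of_pos _ hdpos
    omega
  -- linear functionals
  set φ : (Fin n → ℤ) →ₗ[ℤ] ℤ :=
    { toFun := fun x => Bf M x f
      map_add' := fun x y => Bf_add_left M x y f
      map_smul' := fun c x => by simpa [smul_eq_mul] using Bf_smul_left M c x f } with hφ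
  set ψ : (Fin n → ℤ) →ₗ[ℤ] ℤ :=
    { toFun := fun y => Bf M e y
      map_add' := fun x y => Bf_add_right M e x y
      map_smul' := fun c x => by simpa [smul_eq_mul] using Bf_smul_right M c e x } with hψ
  set W : Submodule ℤ (Fin n → ℤ) := LinearMap.ker φ ⊓ LinearMap.ker ψ with hW
  have hWmem : ∀ z, z ∈ W ↔ Bf M z f = 0 ∧ Bf M e z = 0 := by
    intro z
    simp [hW, Submodule.mem_inf, LinearMap.mem_ker, hφ, hψ]
  obtain ⟨m, w⟩ := Submodule.basisOfPid (Pi.basisFun ℤ (Fin n)) W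
  set v : Fin 2 ⊕ Fin m → (Fin n → ℤ) :=
    Sum.elim ![e, f] (fun i => (w i : Fin n → ℤ)) with hv
  have hBff : Bf M f f = 0 := Bf_self hM f
  have hBee : Bf M e e = 0 := Bf_self hM e
  have hBfe : Bf M f e = -d := by rw [Bf_skew hM, hd]
  -- decomposition of an arbitrary vector
  have hdecomp : ∀ x : Fin n → ℤ,
      x - (Bf M x f / d) • e - (Bf M e x / d) • f ∈ W := by
    intro x
    rw [hWmem]
    constructor
    · rw [Bf_sub_left, Bf_sub_left, Bf_smul_left, Bf_smul_left, hd, hBff,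
        Int.ediv_mul_cancel (hdvd1 x)]
      ring
    · rw [Bf_sub_right, Bf_sub_right, Bf_smul_right, Bf_smul_right, hBee, hd,
        Int.ediv_mul_cancel (hdvd2 x)]
      ring
  have hWspan : ∀ z ∈ W, z ∈ Submodule.span ℤ (Set.range fun i => (w i : Fin n → ℤ)) := by
    intro z hz
    have h1 : (⟨z, hz⟩ : W) ∈ Submodule.span ℤ (Set.range w) := Module.Basis.mem_span w _
    have h2 := Submodule.mem_map_of_mem (f := W.subtype) h1
    rw [Submodule.map_span] at h2
    rw [show ((fun i => (w i : Fin n → ℤ)) : Fin m → Fin n → ℤ) = W.subtype ∘ w from rfl,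
      Set.range_comp]
    exact h2
  have hspan : ⊤ ≤ Submodule.span ℤ (Set.range v) := by
    intro x _
    have he : e ∈ Submodule.span ℤ (Set.range v) :=
      Submodule.subset_span ⟨Sum.inl 0, rfl⟩
    have hf : f ∈ Submodule.span ℤ (Set.range v) :=
      Submodule.subset_span ⟨Sum.inl 1, rfl⟩
    have hw : ∀ z ∈ W, z ∈ Submodule.span ℤ (Set.range v) := by
      intro z hz
      refine Submodule.span_mono ?_ (hWspan z hz)
      rintro _ ⟨i, rfl⟩; exact ⟨Sum.inr i, rfl⟩
    have := hw _ (hdecomp x)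
    have hx : x = (x - (Bf M x f / d) • e - (Bf M e x / d) • f)
        + (Bf M x f / d) • e + (Bf M e x / d) • f := by ring_nf
    rw [hx]
    exact Submodule.add_mem _ (Submodule.add_mem _ this
      (Submodule.smul_mem _ _ he)) (Submodule.smul_mem _ _ hf)
  have hli : LinearIndependent ℤ v := by
    apply LinearIndependent.sum_type
    · rw [Fintype.linearIndependent_iff]
      intro g hg
      have hg' : g 0 • e + g 1 • f = 0 := by
        simpa [Fin.sum_univ_two] using hg
      have h1 : Bf M (g 0 • e + g 1 • f) f = g 0 * d := by
        rw [Bf_add_left, Bf_smul_left, Bf_smul_left, hd, hBff]; ring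
      have h2 : Bf M e (g 0 • e + g 1 • f) = g 1 * d := by
        rw [Bf_add_right, Bf_smul_right, Bf_smul_right, hd, hBee]; ring
      rw [hg'] at h1 h2
      have hz : Bf M 0 f = 0 := by simp [Bf, dotProduct]
      have hz' : Bf M e 0 = 0 := by simp [Bf, dotProduct, mulVec]
      rw [hz] at h1; rw [hz'] at h2
      intro i
      fin_cases i
      · have : g 0 * d = 0 := h1.symm; exact by
          rcases mul_eq_zero.mp this with h | h
          · exact h
          · exact absurd h hdpos.ne'
      · have : g 1 * d = 0 := h2.symm; exact by
          rcases mul_eq_zero.mp this with h | h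
          · exact h
          · exact absurd h hdpos.ne'
    · exact (w.linearIndependent).map' W.subtype (Submodule.ker_subtype W)
    · rw [Submodule.disjoint_def]
      intro x hx1 hx2
      have hxW : x ∈ W := by
        have : Submodule.span ℤ (Set.range fun i => (w i : Fin n → ℤ)) ≤ W := by
          rw [Submodule.span_le]; rintro _ ⟨i, rfl⟩; exact (w i).2
        exact this hx2
      have hrange : Set.range ![e, f] = {e, f} := by
        ext z; simp [Fin.exists_fin_two, or_comm]
      rw [hrange, Submodule.mem_span_pair] at hx1
      obtain ⟨a, b, rfl⟩ := hx1
      obtain ⟨hz1, hz2⟩ := (hWmem _).mp hxW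
      have h1 : a * d = 0 := by
        rw [← hz1, Bf_add_left, Bf_smul_left, Bf_smul_left, hd, hBff]; ring
      have h2 : b * d = 0 := by
        rw [← hz2, Bf_add_right, Bf_smul_right, Bf_smul_right, hd, hBee]; ring
      have ha : a = 0 := by
        rcases mul_eq_zero.mp h1 with h | h
        · exact h
        · exact absurd h hdpos.ne'
      have hb : b = 0 := by
        rcases mul_eq_zero.mp h2 with h | h
        · exact h
        · exact absurd h hdpos.ne'
      rw [ha, hb]; simp
  set bas : Module.Basis (Fin 2 ⊕ Fin m) ℤ (Fin n → ℤ) := Module.Basis.mk hli hspan with hbas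
  have hcard : 2 + m = n := by
    have := Fintype.card_congr (bas.indexEquiv (Pi.basisFun ℤ (Fin n)))
    simpa using this
  set σ : Fin 2 ⊕ Fin m ≃ Fin n := finSumFinEquiv.trans (finCongr hcard) with hσ
  have hσ1 : ∀ a : Fin 2, (σ (Sum.inl a)).val = a.val := by
    intro a; simp [hσ]
  have hσ2 : ∀ i : Fin m, (σ (Sum.inr i)).val = 2 + i.val := by
    intro i; simp [hσ]
  set N : Matrix (Fin m) (Fin m) ℤ := Matrix.of fun i j => Bf M (w i) (w j) with hN
  set P : Matrix (Fin n) (Fin n) ℤ := Matrix.of fun i t => v (σ.symm t) i with hP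
  refine ⟨m, hcard, σ, hσ1, hσ2, d, N, P, hdpos.ne', ?_, ?_, ?_⟩
  · ext i j
    simp only [transpose_apply, hN, Matrix.of_apply, Matrix.neg_apply]
    rw [Bf_skew hM]
  · have hPeq : P = (Pi.basisFun ℤ (Fin n)).toMatrix (bas.reindex σ) := by
      ext i t
      rw [Module.Basis.toMatrix_apply, Module.Basis.reindex_apply, Pi.basisFun_repr]
      simp [hP, hbas]
    rw [hPeq]
    have := (Pi.basisFun ℤ (Fin n)).invertibleToMatrix (bas.reindex σ)
    exact Matrix.isUnit_det_of_invertible _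
  · ext s t
    rw [congr_apply]
    have hcol : ∀ u : Fin n, (fun a => P a u) = v (σ.symm u) := by
      intro u; ext a; simp [hP]
    rw [hcol s, hcol t]
    rw [Matrix.reindex_apply, Matrix.submatrix_apply]
    have hwW : ∀ i : Fin m, ((w i : Fin n → ℤ)) ∈ W := fun i => (w i).2
    rcases hps : σ.symm s with a | i <;> rcases hpt : σ.symm t with b | j
    · fin_cases a <;> fin_cases b <;>
        simp [hv, hBee, hBff, hBfe, hd, Matrix.fromBlocks_apply₁₁]
    · obtain ⟨h1, h2⟩ := (hWmem _).mp (hwW j)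
      fin_cases a
      · simpa [hv] using h2
      · have := Bf_skew hM (w j : Fin n → ℤ) f
        rw [h1] at this
        simpa [hv] using this
    · obtain ⟨h1, h2⟩ := (hWmem _).mp (hwW i)
      fin_cases b
      · have := Bf_skew hM e (w i : Fin n → ℤ)
        rw [h2] at this
        simpa [hv] using this
      · simpa [hv] using h1
    · simp [hv, hN]

lemma NF_apply {n k : ℕ} (lam : Fin k → ℤ) (s t : Fin n) :
    skewNormalForm n k lam s t =
    if h : s.val < 2 * k ∧ t.val < 2 * k then
      if t.val = s.val + 1 ∧ s.val % 2 = 0 then lam ⟨s.val / 2, by omega⟩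
      else if s.val = t.val + 1 ∧ t.val % 2 = 0 then -lam ⟨t.val / 2, by omega⟩
      else 0
    else 0 := rfl

lemma cons_eq {k : ℕ} (d : ℤ) (lam : Fin k → ℤ) (q : Fin (k+1)) (p : ℕ) (hp : p < k)
    (h : q.val = p + 1) : (Fin.cons d lam : Fin (k+1) → ℤ) q = lam ⟨p, hp⟩ := by
  have hq : q = Fin.succ ⟨p, hp⟩ := Fin.ext (by simp [h])
  rw [hq, Fin.cons_succ]

lemma reindex_NF {n m : ℕ} (σ : Fin 2 ⊕ Fin m ≃ Fin n)
    (hσ1 : ∀ a : Fin 2, (σ (Sum.inl a)).val = a.val)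
    (hσ2 : ∀ i : Fin m, (σ (Sum.inr i)).val = 2 + i.val)
    (d : ℤ) (k' : ℕ) (lam' : Fin k' → ℤ) (h2k : 2 * k' ≤ m) :
    Matrix.reindex σ σ (Matrix.fromBlocks !![0,d;-d,0] 0 0 (skewNormalForm m k' lam'))
      = skewNormalForm n (k'+1) (Fin.cons d lam') := by
  ext s t
  rw [Matrix.reindex_apply, Matrix.submatrix_apply]
  have hs' := σ.apply_symm_apply s
  have ht' := σ.apply_symm_apply t
  rcases hps : σ.symm s with a | i <;> rcases hpt : σ.symm t with b | j
  · rw [hps] at hs'; rw [hpt] at ht'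
    have hs : s.val = a.val := by rw [← hs', hσ1]
    have ht : t.val = b.val := by rw [← ht', hσ1]
    rw [Matrix.fromBlocks_apply₁₁, NF_apply]
    fin_cases a <;> fin_cases b <;> simp at hs ht <;>
      simp [hs, ht, Fin.mk_zero, Fin.cons_zero] <;> omega
  · rw [hps] at hs'; rw [hpt] at ht'
    have hs : s.val = a.val := by rw [← hs', hσ1]
    have ht : t.val = 2 + j.val := by rw [← ht', hσ2]
    rw [Matrix.fromBlocks_apply₁₂, NF_apply]
    have ha : a.val < 2 := a.2
    simp only [Matrix.zero_apply]
    split_ifs with h h1 h2 <;> first | rfl | (exfalso; omega)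
  · rw [hps] at hs'; rw [hpt] at ht'
    have hs : s.val = 2 + i.val := by rw [← hs', hσ2]
    have ht : t.val = b.val := by rw [← ht', hσ1]
    rw [Matrix.fromBlocks_apply₂₁, NF_apply]
    have hb : b.val < 2 := b.2
    simp only [Matrix.zero_apply]
    split_ifs with h h1 h2 <;> first | rfl | (exfalso; omega)
  · rw [hps] at hs'; rw [hpt] at ht'
    have hs : s.val = 2 + i.val := by rw [← hs', hσ2]
    have ht : t.val = 2 + j.val := by rw [← ht', hσ2]
    rw [Matrix.fromBlocks_apply₂₂, NF_apply, NF_apply]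
    have hi : i.val < m := i.2
    have hj : j.val < m := j.2
    split_ifs with h1 h2 h3 h4 h5 h6 <;>
      first
        | rfl
        | (exfalso; omega)
        | (rw [cons_eq d lam' _ (i.val/2) (by omega) (by simp; omega)]
           first
             | rfl
             | exact congrArg lam' (Fin.ext (by simp; omega))
             | exact congrArg Neg.neg (congrArg lam' (Fin.ext (by simp; omega))))
        | (rw [cons_eq d lam' _ (j.val/2) (by omega) (by simp; omega)]
           first
             | rfl
             | exact congrArg lam' (Fin.ext (by simp; omega))
             | exact congrArg Neg.neg (congrArg lam' (Fin.ext (by simp; omega))))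

theorem aux : ∀ n (M : Matrix (Fin n) (Fin n) ℤ), Mᵀ = -M →
    ∃ (k : ℕ) (_ : 2 * k ≤ n) (lam : Fin k → ℤ) (U : Matrix (Fin n) (Fin n) ℤ),
      (∀ i, lam i ≠ 0) ∧ IsUnit U.det ∧ Uᵀ * M * U = skewNormalForm n k lam := by
  intro n
  induction n using Nat.strong_induction_on with
  | _ n IH =>
    intro M hM
    by_cases hM0 : M = 0
    · refine ⟨0, by omega, Fin.elim0, 1, fun i => i.elim0, by simp, ?_⟩
      subst hM0
      ext s t
      simp [skewNormalForm]
    · obtain ⟨m, hm, σ, hσ1, hσ2, d, N, P, hd0, hNskew, hPdet, hPM⟩ := step M hM hM0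
      obtain ⟨k', hk', lam', V, hlam', hVdet, hVN⟩ := IH m (by omega) N hNskew
      set C : Matrix (Fin n) (Fin n) ℤ :=
        Matrix.reindex σ σ (Matrix.fromBlocks 1 0 0 V) with hC
      refine ⟨k'+1, by omega, Fin.cons d lam', P * C, ?_, ?_, ?_⟩
      · intro i
        refine Fin.cases ?_ ?_ i
        · simpa using hd0
        · intro j; simpa using hlam' j
      · rw [Matrix.det_mul]
        apply hPdet.mul
        rw [hC, Matrix.det_reindex_self, Matrix.det_fromBlocks_zero₂₁]
        simpa using hVdet
      · have h1 : (P * C)ᵀ * M * (P * C) = Cᵀ * (Pᵀ * M * P) * C := by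
          rw [Matrix.transpose_mul]
          simp only [Matrix.mul_assoc]
        have hmul : ∀ (A B : Matrix (Fin 2 ⊕ Fin m) (Fin 2 ⊕ Fin m) ℤ),
            Matrix.reindex σ σ A * Matrix.reindex σ σ B = Matrix.reindex σ σ (A * B) := by
          intro A B
          simp only [Matrix.reindex_apply]
          exact Matrix.submatrix_mul_equiv A B _ _ _
        have hCT : Cᵀ = Matrix.reindex σ σ (Matrix.fromBlocks 1 0 0 Vᵀ) := by
          rw [hC, Matrix.transpose_reindex, Matrix.fromBlocks_transpose]
          simp
        rw [h1, hPM, hCT, hmul, hmul, Matrix.fromBlocks_multiply, Matrix.fromBlocks_multiply]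
        simp only [Matrix.one_mul, Matrix.mul_one, Matrix.zero_mul, Matrix.mul_zero,
          add_zero, zero_add]
        rw [hVN]
        exact reindex_NF σ hσ1 hσ2 d k' lam' hk'

lemma rank_NF {n k : ℕ} (h2k : 2 * k ≤ n) (lam : Fin k → ℤ) (hlam : ∀ i, lam i ≠ 0) :
    ((skewNormalForm n k lam).map (Int.cast : ℤ → ℚ)).rank = 2 * k := by
  classical
  set c : ℤ → ℚ := (Int.cast : ℤ → ℚ)
  set NQ : Matrix (Fin n) (Fin n) ℚ := (skewNormalForm n k lam).map c with hNQ
  -- the permutation and signs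
  set π : Fin n → Fin n := fun j =>
    ⟨if j.val < 2 * k then (if j.val % 2 = 0 then j.val + 1 else j.val - 1) else j.val,
      by split_ifs <;> omega⟩ with hπ
  have hπval : ∀ j : Fin n, (π j).val =
      if j.val < 2 * k then (if j.val % 2 = 0 then j.val + 1 else j.val - 1) else j.val :=
    fun j => rfl
  have hπinj : Function.Injective π := by
    intro i j h
    have hi := congrArg Fin.val h
    rw [hπval, hπval] at hi
    apply Fin.ext
    split_ifs at hi <;> omega
  set s : Fin n → ℚ := fun j => if j.val < 2 * k ∧ j.val % 2 = 0 then -1 else 1 with hs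
  set S : Matrix (Fin n) (Fin n) ℚ := Matrix.of fun i j => if i = π j then s j else 0 with hS
  set w : Fin n → ℚ := fun j => if h : j.val < 2 * k then c (lam ⟨j.val / 2, by omega⟩) else 0
    with hw
  have hSTS : Sᵀ * S = 1 := by
    ext i j
    rw [Matrix.mul_apply]
    rw [Finset.sum_eq_single (π i)]
    · simp only [hS, transpose_apply, Matrix.of_apply, if_pos rfl]
      by_cases hij : i = j
      · subst hij
        rw [if_pos rfl, Matrix.one_apply_eq]
        simp only [hs]
        split_ifs <;> norm_num
      · rw [if_neg (fun h => hij (hπinj h)), Matrix.one_apply_ne hij, mul_zero]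
    · intro t _ ht
      simp only [hS, transpose_apply, Matrix.of_apply]
      rw [if_neg ht, zero_mul]
    · intro h; exact absurd (Finset.mem_univ _) h
  have hSdet : IsUnit S.det := Matrix.isUnit_det_of_left_inverse hSTS
  have hfact : NQ = S * Matrix.diagonal w := by
    ext i j
    rw [Matrix.mul_diagonal]
    simp only [hNQ, hS, Matrix.map_apply, Matrix.of_apply, skewNormalForm]
    by_cases hj : j.val < 2 * k
    · rw [hw]
      simp only [dif_pos hj]
      by_cases hiπ : i = π j
      · rw [if_pos hiπ]
        have hival : i.val = (π j).val := by rw [hiπ]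
        rw [hπval] at hival
        rw [if_pos hj] at hival
        by_cases hje : j.val % 2 = 0
        · rw [if_pos hje] at hival
          have h1 : i.val < 2 * k ∧ j.val < 2 * k := ⟨by omega, hj⟩
          rw [dif_pos h1, if_neg (by omega), if_pos ⟨by omega, hje⟩]
          simp only [hs]
          rw [if_pos ⟨hj, hje⟩]
          push_cast
          ring_nf
          congr 1
        · rw [if_neg hje] at hival
          have hj1 : 1 ≤ j.val := by omega
          have h1 : i.val < 2 * k ∧ j.val < 2 * k := ⟨by omega, hj⟩
          rw [dif_pos h1, if_pos ⟨by omega, by omega⟩]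
          simp only [hs]
          rw [if_neg (by omega)]
          rw [one_mul]
          congr 2
          exact Fin.ext (by simp; omega)
      · rw [if_neg hiπ, zero_mul]
        have hπjval := hπval j
        rw [if_pos hj] at hπjval
        by_cases h1 : i.val < 2 * k
        · rw [dif_pos ⟨h1, hj⟩,
            if_neg (fun hc => hiπ (Fin.ext (by rw [hπjval, if_neg (by omega)]; omega))),
            if_neg (fun hc => hiπ (Fin.ext (by rw [hπjval, if_pos hc.2]; omega)))]
          simp [c]
        · rw [dif_neg (by omega)]
          simp [c]
    · rw [hw]
      simp only [dif_neg hj]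
      rw [mul_zero, dif_neg (by omega)]
      simp [c]
  rw [hfact, Matrix.rank_mul_eq_right_of_isUnit_det S (Matrix.diagonal w) hSdet,
    Matrix.rank_diagonal]
  have hiff : ∀ i : Fin n, w i ≠ 0 ↔ i.val < 2 * k := by
    intro i
    rw [hw]
    by_cases h : i.val < 2 * k
    · simp only [dif_pos h]
      have := hlam ⟨i.val / 2, by omega⟩
      constructor
      · intro _; exact h
      · intro _
        simpa [c] using this
    · simp [dif_neg h, h]
  rw [Fintype.card_congr ((Equiv.subtypeEquivRight hiff).trans
    (⟨fun t => ⟨t.1.1, t.2⟩, fun t => ⟨⟨t.1, by omega⟩, t.2⟩,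
      fun t => by ext; rfl, fun t => by ext; rfl⟩ :
      {i : Fin n // i.val < 2 * k} ≃ Fin (2 * k)))]
  simp


end SkewNF

/-- Every nonzero skew-symmetric `n×n` integer matrix is congruent over `ℤ` to a block
diagonal matrix consisting of `k` blocks `[[0, λᵢ], [-λᵢ, 0]]` with `λᵢ ≠ 0` followed by a
zero block; in particular its rank is `2k`. -/
theorem skew_symmetric_normal_form {n : ℕ} (M : Matrix (Fin n) (Fin n) ℤ)
    (hM : M.transpose = -M) (hM0 : M ≠ 0) :
    ∃ (k : ℕ) (_ : 2 * k ≤ n) (lam : Fin k → ℤ) (U : Matrix (Fin n) (Fin n) ℤ),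
      (∀ i, lam i ≠ 0) ∧ IsUnit U.det ∧
      U.transpose * M * U = skewNormalForm n k lam ∧
      (M.map (Int.cast : ℤ → ℚ)).rank = 2 * k := by
  obtain ⟨k, hk, lam, U, hlam, hU, hNF⟩ := SkewNF.aux n M hM
  refine ⟨k, hk, lam, U, hlam, hU, hNF, ?_⟩
  set f : ℤ →+* ℚ := Int.castRingHom ℚ with hf
  have hmap : ((Uᵀ * M * U).map (Int.cast : ℤ → ℚ)) =
      (U.map (Int.cast : ℤ → ℚ))ᵀ * M.map (Int.cast : ℤ → ℚ) * U.map (Int.cast : ℤ → ℚ) := by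
    show ((Uᵀ * M * U).map f) = (U.map f)ᵀ * M.map f * U.map f
    rw [Matrix.map_mul, Matrix.map_mul, Matrix.transpose_map]
  have hdet : IsUnit ((U.map (Int.cast : ℤ → ℚ)).det) := by
    show IsUnit ((U.map f).det)
    exact (RingHom.map_det f U) ▸ hU.map f
  have hdetT : IsUnit (((U.map (Int.cast : ℤ → ℚ))ᵀ).det) := by
    rw [Matrix.det_transpose]; exact hdet
  calc (M.map (Int.cast : ℤ → ℚ)).rank
      = ((U.map (Int.cast : ℤ → ℚ))ᵀ * M.map (Int.cast : ℤ → ℚ)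
          * U.map (Int.cast : ℤ → ℚ)).rank := by
        rw [Matrix.rank_mul_eq_left_of_isUnit_det _ _ hdet,
          Matrix.rank_mul_eq_right_of_isUnit_det _ _ hdetT]
    _ = ((skewNormalForm n k lam).map (Int.cast : ℤ → ℚ)).rank := by
        rw [← hmap, hNF]
    _ = 2 * k := SkewNF.rank_NF hk lam hlam
end

section
/- Let M be a skew-symmetric integer matrix indexed by a finite set V, and suppose there exist distinct indices v₁, v₂, w₁, w₂ ∈ V with M_{v₁,v₂} ≠ 0, M_{w₁,w₂} ≠ 0, and M_{v₁,w₁} = M_{v₁,w₂} = 0, where M_{v₂,w₁} and M_{v₂,w₂} are arbitrary (this includes the disjoint edges case M_{v₂,w₁} = M_{v₂,w₂} = 0 as well as the missing square case). Then the rank of M is at least 4. -/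
/-- If a skew-symmetric integer matrix `M` has distinct indices `v₁, v₂, w₁, w₂` with
`M_{v₁,v₂} ≠ 0`, `M_{w₁,w₂} ≠ 0` and `M_{v₁,w₁} = M_{v₁,w₂} = 0` (two "edges" that do not
form two sides of a square), then `rank M ≥ 4`. -/
theorem rank_ge_four_of_no_square {V : Type} [Fintype V] [DecidableEq V]
    (M : Matrix V V ℤ) (hM : M.transpose = -M)
    (v₁ v₂ w₁ w₂ : V)
    (hdist : ([v₁, v₂, w₁, w₂] : List V).Nodup)
    (hv : M v₁ v₂ ≠ 0) (hw : M w₁ w₂ ≠ 0)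
    (h1 : M v₁ w₁ = 0) (h2 : M v₁ w₂ = 0) :
    4 ≤ (M.map (Int.cast : ℤ → ℚ)).rank := by
  have skew : ∀ a b, M b a = - M a b := by
    intro a b
    have := congrFun (congrFun hM a) b
    simpa [Matrix.transpose_apply] using this
  set M' : Matrix V V ℚ := M.map (Int.cast : ℤ → ℚ) with hM'
  -- the four rows
  set r : Fin 4 → (V → ℚ) := ![M' v₁, M' v₂, M' w₁, M' w₂] with hr
  have hli : LinearIndependent ℚ r := by
    rw [Fintype.linearIndependent_iff]
    intro g hg
    have hfun : ∀ x : V, g 0 * M' v₁ x + g 1 * M' v₂ x + g 2 * M' w₁ x + g 3 * M' w₂ x = 0 := by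
      intro x
      have := congrFun hg x
      simpa [hr, Fin.sum_univ_four, mul_comm] using this
    have ha : (M v₁ v₂ : ℚ) ≠ 0 := by exact_mod_cast hv
    have hd : (M w₁ w₂ : ℚ) ≠ 0 := by exact_mod_cast hw
    have e1 := hfun v₁
    have hdiag : ∀ a, M a a = 0 := by
      intro a; have := skew a a; omega
    have hg1 : g 1 = 0 := by
      have hwv1 : M w₁ v₁ = 0 := by rw [skew]; simp [h1]
      have hwv2 : M w₂ v₁ = 0 := by rw [skew]; simp [h2]
      have hvv : M v₂ v₁ = - M v₁ v₂ := skew _ _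
      have h := hfun v₁
      simp [hM', Matrix.map_apply, hdiag, hwv1, hwv2, hvv] at h
      tauto
    have hg3 : g 3 = 0 := by
      have hww : M w₂ w₁ = - M w₁ w₂ := skew _ _
      have h := hfun w₁
      simp [hM', Matrix.map_apply, hdiag, h1, hww, hg1] at h
      tauto
    have hg2 : g 2 = 0 := by
      have h := hfun w₂
      simp [hM', Matrix.map_apply, hdiag, h2, hg1, hg3, skew w₁ w₂] at h
      tauto
    have hg0 : g 0 = 0 := by
      have hvv : M v₂ v₁ = - M v₁ v₂ := skew _ _
      have h := hfun v₂
      simp [hM', Matrix.map_apply, hdiag, hg2, hg3, hg1] at h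
      tauto
    intro i
    fin_cases i <;> assumption
  -- row span argument
  rw [Matrix.rank_eq_finrank_span_row]
  have hle : Submodule.span ℚ (Set.range r) ≤ Submodule.span ℚ (Set.range M') := by
    apply Submodule.span_mono
    rintro x ⟨i, rfl⟩
    fin_cases i <;> exact ⟨_, rfl⟩
  have h4 : Module.finrank ℚ (Submodule.span ℚ (Set.range r)) = 4 := by
    have := finrank_span_eq_card hli
    simpa using this
  calc (4 : ℕ) = Module.finrank ℚ (Submodule.span ℚ (Set.range r)) := h4.symm
    _ ≤ Module.finrank ℚ (Submodule.span ℚ (Set.range M')) := Submodule.finrank_mono hle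
end

section
/- Let Γ be a finite tree and let α be an integer edge-labelling of Γ with associated skew-symmetric connection matrix M_α. If rank M_α = 2, then the support of α (the subgraph of edges with nonzero label) is a star: all edges of supp(α) share a common vertex. -/
open SimpleGraph Matrix

section Aux

variable {V : Type} {Γ : SimpleGraph V}

private lemma aux_tri (hT : Γ.IsTree) {a b c : V} (hab : Γ.Adj a b) (hbc : Γ.Adj b c)
    (hac : Γ.Adj a c) : False := by
  have hp : (Walk.cons hab (Walk.cons hbc Walk.nil)).IsPath := by
    simp [Walk.isPath_def, hab.ne, hbc.ne, hac.ne]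
  have hq : (Walk.cons hac Walk.nil).IsPath := by
    simp [Walk.isPath_def, hac.ne]
  have := (hT.existsUnique_path a c).unique hp hq
  simpa using congrArg Walk.length this

private lemma aux_quad (hT : Γ.IsTree) {a b c d : V} (hab : Γ.Adj a b) (hbd : Γ.Adj b d)
    (hac : Γ.Adj a c) (hcd : Γ.Adj c d) (hbc : b ≠ c) (had : a ≠ d) : False := by
  have hp : (Walk.cons hab (Walk.cons hbd Walk.nil)).IsPath := by
    simp [Walk.isPath_def, hab.ne, hbd.ne, had]
  have hq : (Walk.cons hac (Walk.cons hcd Walk.nil)).IsPath := by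
    simp [Walk.isPath_def, hac.ne, hcd.ne, had]
  have := (hT.existsUnique_path a d).unique hp hq
  have := congrArg Walk.support this
  simp [Walk.support_cons] at this
  exact hbc this

private lemma aux_quad2 (hT : Γ.IsTree) {a b c d : V} (hab : Γ.Adj a b) (hbc : Γ.Adj b c)
    (hcd : Γ.Adj c d) (had : Γ.Adj a d) (hac : a ≠ c) (hbd : b ≠ d) : False := by
  have hp : (Walk.cons hab (Walk.cons hbc (Walk.cons hcd Walk.nil))).IsPath := by
    simp [Walk.isPath_def, hab.ne, hbc.ne, hcd.ne, hac, hbd, had.ne]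
  have hq : (Walk.cons had Walk.nil).IsPath := by
    simp [Walk.isPath_def, had.ne]
  have := (hT.existsUnique_path a d).unique hp hq
  simpa using congrArg Walk.length this

private lemma aux_rank {V : Type} [Fintype V] [DecidableEq V] (N : Matrix V V ℚ)
    (f : Fin 4 → V) (hdet : (N.submatrix f f).det ≠ 0) : 4 ≤ N.rank := by
  have hli : LinearIndependent ℚ (fun i => N.transpose (f i)) := by
    rw [Fintype.linearIndependent_iff]
    intro g hg i
    have hz : (N.submatrix f f) *ᵥ g = 0 := by
      ext j
      have := congrFun hg (f j)
      simpa [mulVec, dotProduct, Matrix.transpose_apply, Finset.sum_apply,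
        mul_comm] using this
    have := Matrix.eq_zero_of_mulVec_eq_zero hdet hz
    exact congrFun this i
  rw [Matrix.rank_eq_finrank_span_cols]
  calc (4 : ℕ) = Module.finrank ℚ
        (Submodule.span ℚ (Set.range (fun i => N.transpose (f i)))) := by
        rw [finrank_span_eq_card hli]; simp
    _ ≤ _ := Submodule.finrank_mono
        (Submodule.span_mono (Set.range_comp_subset_range f N.transpose))

private lemma aux_det {V : Type} [Fintype V] [DecidableEq V] (M : Matrix V V ℤ)
    (hskew : ∀ v w, M w v = - M v w) (hdiag : ∀ v, M v v = 0) (a b c d : V) :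
    ((M.map (Int.cast : ℤ → ℚ)).submatrix ![a,b,c,d] ![a,b,c,d]).det =
      ((M a b : ℚ) * M c d - M a c * M b d + M a d * M b c)^2 := by
  have hm : (M.map (Int.cast : ℤ → ℚ)).submatrix ![a,b,c,d] ![a,b,c,d] =
      !![(M a a : ℚ), M a b, M a c, M a d; M b a, M b b, M b c, M b d;
        M c a, M c b, M c c, M c d; M d a, M d b, M d c, M d d] := by
    ext i j; fin_cases i <;> fin_cases j <;> rfl
  rw [hm, Matrix.det_succ_row_zero]
  simp [Fin.sum_univ_succ, Matrix.det_fin_three, Fin.succAbove]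
  rw [hdiag a, hdiag b, hdiag c, hdiag d, hskew a b, hskew a c, hskew a d, hskew b c,
    hskew b d, hskew c d]
  push_cast
  ring

end Aux

/-- Let `Γ` be a finite tree with an integer edge labelling, encoded as a skew-symmetric
connection matrix `M` supported on the edges of `Γ`.  If `rank M = 2`, then the support of
the labelling is a star: all edges with nonzero label share a common vertex. -/
theorem support_is_star_of_rank_two {V : Type} [Fintype V] [DecidableEq V]
    (Γ : SimpleGraph V) (hT : Γ.IsTree)
    (M : Matrix V V ℤ) (hM : M.transpose = -M)
    (hsupp : ∀ v w, ¬ Γ.Adj v w → M v w = 0)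
    (hrank : (M.map (Int.cast : ℤ → ℚ)).rank = 2) :
    ∃ c : V, ∀ v w, M v w ≠ 0 → v = c ∨ w = c := by
  have hskew : ∀ v w, M w v = - M v w := by
    intro v w
    have := congrFun (congrFun hM v) w
    simpa [Matrix.transpose_apply] using this
  have hdiag : ∀ v, M v v = 0 := by
    intro v; have := hskew v v; omega
  have hadj : ∀ v w, M v w ≠ 0 → Γ.Adj v w := by
    intro v w h
    by_contra hc
    exact h (hsupp v w hc)
  -- key: no two vertex-disjoint support edges
  have key : ∀ a b c d : V, M a b ≠ 0 → M c d ≠ 0 →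
      a ≠ c → a ≠ d → b ≠ c → b ≠ d → False := by
    intro a b c d hab0 hcd0 hac had hbc hbd
    have hab : Γ.Adj a b := hadj _ _ hab0
    have hcd : Γ.Adj c d := hadj _ _ hcd0
    have h1 : M a c * M b d = 0 := by
      by_contra h
      rcases mul_ne_zero_iff.1 h with ⟨h1, h2⟩
      exact aux_quad hT hab (hadj _ _ h2) (hadj _ _ h1) hcd hbc had
    have h2 : M a d * M b c = 0 := by
      by_contra h
      rcases mul_ne_zero_iff.1 h with ⟨h1, h2⟩
      exact aux_quad2 hT hab (hadj _ _ h2) hcd (hadj _ _ h1) hac hbd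
    have hdet := aux_det M hskew hdiag a b c d
    have h1' : (M a c : ℚ) * M b d = 0 := by exact_mod_cast congrArg (Int.cast : ℤ → ℚ) h1
    have h2' : (M a d : ℚ) * M b c = 0 := by exact_mod_cast congrArg (Int.cast : ℤ → ℚ) h2
    rw [h1', h2'] at hdet
    have hdet' : ((M.map (Int.cast : ℤ → ℚ)).submatrix ![a,b,c,d] ![a,b,c,d]).det ≠ 0 := by
      rw [hdet]
      have h : (M a b : ℚ) * M c d ≠ 0 := by
        apply mul_ne_zero <;> exact_mod_cast ‹_›
      simpa using pow_ne_zero 2 h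
    have := aux_rank _ _ hdet'
    omega
  -- get one support edge
  have hM0 : ∃ a b, M a b ≠ 0 := by
    by_contra h
    push_neg at h
    have : M.map (Int.cast : ℤ → ℚ) = 0 := by
      ext v w; simp [h v w]
    rw [this] at hrank
    simp [Matrix.rank_zero] at hrank
  obtain ⟨a, b, hab0⟩ := hM0
  have hab : Γ.Adj a b := hadj _ _ hab0
  by_contra hstar
  push_neg at hstar
  obtain ⟨p, q, hpq0, hpa, hqa⟩ := hstar a
  obtain ⟨r, s, hrs0, hrb, hsb⟩ := hstar b
  -- normalize first edge: disjoint from {a,b}, or incident to b at one end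
  have step1 : (p ≠ b ∧ q ≠ b → False) := fun ⟨hpb, hqb⟩ =>
    key a b p q hab0 hpq0 (Ne.symm hpa) (Ne.symm hqa) (Ne.symm hpb) (Ne.symm hqb)
  have step2 : (r ≠ a ∧ s ≠ a → False) := fun ⟨hra, hsa⟩ =>
    key a b r s hab0 hrs0 (Ne.symm hra) (Ne.symm hsa) (Ne.symm hrb) (Ne.symm hsb)
  -- extract x with M b x ≠ 0, x ∉ {a,b}
  have hx : ∃ x, x ≠ a ∧ x ≠ b ∧ M b x ≠ 0 := by
    by_cases hpb : p = b
    · subst hpb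
      refine ⟨q, hqa, (hadj _ _ hpq0).ne', hpq0⟩
    · by_cases hqb : q = b
      · subst hqb
        refine ⟨p, hpa, (hadj _ _ hpq0).ne, ?_⟩
        rw [hskew]; simpa using hpq0
      · exact absurd (step1 ⟨hpb, hqb⟩) not_false
  have hy : ∃ y, y ≠ a ∧ y ≠ b ∧ M a y ≠ 0 := by
    by_cases hra : r = a
    · subst hra
      refine ⟨s, (hadj _ _ hrs0).ne', hsb, hrs0⟩
    · by_cases hsa : s = a
      · subst hsa
        refine ⟨r, (hadj _ _ hrs0).ne, hrb, ?_⟩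
        rw [hskew]; simpa using hrs0
      · exact absurd (step2 ⟨hra, hsa⟩) not_false
  obtain ⟨x, hxa, hxb, hbx0⟩ := hx
  obtain ⟨y, hya, hyb, hay0⟩ := hy
  have hxy : x ≠ y := by
    rintro rfl
    exact aux_tri hT hab (hadj _ _ hbx0) (hadj _ _ hay0)
  exact key a y b x hay0 hbx0 hab.ne (Ne.symm hxa) hyb (Ne.symm hxy)
end

section
/- Let Γ be a finite simple graph with an integer edge-labelling whose support is all of Γ (all labels nonzero), and let M be the connection matrix. If rank M = 2, then Γ (assumed connected, nonempty) is a complete multipartite graph: the relation 'v = w or {v,w} ∉ E(Γ)' is an equivalence relation on V(Γ). -/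
lemma aux_rank_submatrix_le {m n : Type} [Fintype m] [Fintype n] [DecidableEq m]
    (A : Matrix m m ℚ) (f g : n → m) : (A.submatrix f g).rank ≤ A.rank := by
  have h1 : ((1 : Matrix m m ℚ).submatrix f (Equiv.refl m)) * A = A.submatrix f id := by
    simpa using Matrix.one_submatrix_mul f (Equiv.refl m) A
  have h2 : (A.submatrix f id) * ((1 : Matrix m m ℚ).submatrix (Equiv.refl m) g)
      = A.submatrix f g := by
    simpa using Matrix.mul_submatrix_one (Equiv.refl m) g (A.submatrix f id)
  calc (A.submatrix f g).rank
      = ((A.submatrix f id) * ((1 : Matrix m m ℚ).submatrix (Equiv.refl m) g)).rank := by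
        rw [h2]
    _ ≤ (A.submatrix f id).rank := Matrix.rank_mul_le_left _ _
    _ = (((1 : Matrix m m ℚ).submatrix f (Equiv.refl m)) * A).rank := by rw [h1]
    _ ≤ A.rank := Matrix.rank_mul_le_right _ _

/-- Let `Γ` be a finite connected nonempty simple graph carrying an integer edge labelling
with full support, encoded as a skew-symmetric connection matrix `M` whose nonzero entries
are exactly at adjacent pairs.  If `rank M = 2`, then `Γ` is complete multipartite:
the relation "`v = w` or `{v,w} ∉ E(Γ)`" is an equivalence relation on the vertices. -/
theorem complete_multipartite_of_rank_two {V : Type} [Fintype V]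
    (Γ : SimpleGraph V) (hconn : Γ.Connected)
    (M : Matrix V V ℤ) (hM : M.transpose = -M)
    (hsupp : ∀ v w, M v w ≠ 0 ↔ Γ.Adj v w)
    (hrank : (M.map (Int.cast : ℤ → ℚ)).rank = 2) :
    Equivalence fun v w : V => v = w ∨ ¬ Γ.Adj v w := by
  classical
  have skew : ∀ v w, M w v = -(M v w) := fun v w => congrFun (congrFun hM v) w
  have diag : ∀ v, M v v = 0 := fun v => by have := skew v v; omega
  have nz : ∀ {v w}, ¬ Γ.Adj v w → M v w = 0 := fun h => by
    by_contra h'; exact h ((hsupp _ _).mp h')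
  constructor
  · exact fun v => Or.inl rfl
  · rintro v w (rfl | h)
    · exact Or.inl rfl
    · exact Or.inr fun h' => h h'.symm
  · rintro v w u (rfl | h1) h2
    · exact h2
    rcases h2 with rfl | h2
    · exact Or.inr h1
    by_cases hvu : v = u
    · exact Or.inl hvu
    refine Or.inr fun hadj => ?_
    have hvw : v ≠ w := fun h => h2 (h ▸ hadj)
    obtain ⟨x, hx⟩ : ∃ x, Γ.Adj w x := by
      obtain ⟨p⟩ := hconn w v
      cases p with
      | nil => exact absurd rfl (Ne.symm hvw)
      | cons h q => exact ⟨_, h⟩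
    set N : Matrix (Fin 3) (Fin 3) ℚ :=
      (M.map (Int.cast : ℤ → ℚ)).submatrix ![v, w, u] ![v, u, x] with hN
    have hwv : M w v = 0 := nz fun h' => h1 h'.symm
    have hwu : M w u = 0 := nz h2
    have hvu' : (M v u : ℚ) ≠ 0 := Int.cast_ne_zero.mpr ((hsupp v u).mpr hadj)
    have hwx : (M w x : ℚ) ≠ 0 := Int.cast_ne_zero.mpr ((hsupp w x).mpr hx)
    have hdet : N.det ≠ 0 := by
      rw [Matrix.det_fin_three]
      simp only [hN, Matrix.submatrix_apply, Matrix.map_apply, Matrix.cons_val',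
        Matrix.cons_val_zero, Matrix.cons_val_one, Matrix.head_cons, Matrix.cons_val_two,
        Matrix.tail_cons, Matrix.empty_val', Matrix.cons_val_fin_one]
      rw [diag v, diag u, hwv, hwu, skew v u]
      push_cast
      ring_nf
      intro h
      rw [neg_eq_zero, mul_eq_zero] at h
      rcases h with h' | h'
      · exact hwx h'
      · exact hvu' (pow_eq_zero_iff (by norm_num) |>.mp h')
    have h3 : N.rank = 3 := by
      have := Matrix.rank_of_isUnit N
        ((Matrix.isUnit_iff_isUnit_det N).mpr (isUnit_iff_ne_zero.mpr hdet))
      simpa using this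
    have hle : N.rank ≤ 2 := hrank ▸ aux_rank_submatrix_le _ _ _
    omega
end

section
/- Let Γ be a tree with an integer edge-labelling α of full support, let M_α be the connection matrix, and let sc(α) be the minimal number of labelled stars (subgraphs all of whose edges share a vertex) whose edge-label sums reproduce the labelling. Then sc(α) = (1/2) rank M_α. -/
open Matrix

set_option linter.unusedSectionVars false
set_option maxHeartbeats 1000000

section StarCoverHelpers

variable {V : Type} [Fintype V] [DecidableEq V]

private lemma myRankAdd (A B : Matrix V V ℚ) : (A + B).rank ≤ A.rank + B.rank := by
  rw [Matrix.rank, Matrix.rank, Matrix.rank, Matrix.mulVecLin_add]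
  have hle : LinearMap.range (A.mulVecLin + B.mulVecLin) ≤
      LinearMap.range A.mulVecLin ⊔ LinearMap.range B.mulVecLin := by
    rintro x ⟨y, rfl⟩
    exact Submodule.mem_sup.mpr ⟨A.mulVecLin y, ⟨y, rfl⟩, B.mulVecLin y, ⟨y, rfl⟩, rfl⟩
  exact le_trans (Submodule.finrank_mono hle)
    (Submodule.finrank_add_le_finrank_add_finrank _ _)

private lemma myRowRank (A : Matrix V V ℚ) (c : V) (h : ∀ v w, A v w ≠ 0 → v = c) :
    A.rank ≤ 1 := by
  have hA : A = Matrix.vecMulVec (fun v => if v = c then 1 else 0) (A c) := by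
    ext v w
    by_cases hv : v = c
    · subst hv; simp [Matrix.vecMulVec_apply]
    · have h0 : A v w = 0 := by by_contra h0; exact hv (h v w h0)
      simp [Matrix.vecMulVec_apply, hv, h0]
  have h2 : (Matrix.vecMulVec (fun v => if v = c then (1:ℚ) else 0) (A c)).toLin'.rank ≤ 1 :=
    Matrix.rank_vecMulVec _ _
  have h3 : A.toLin' = A.mulVecLin := by
    ext v w
    simp [Matrix.toLin'_apply, Matrix.mulVecLin_apply]
  have h4 : A.rank = (LinearMap.rank A.toLin').toNat := by
    rw [h3, Matrix.rank, LinearMap.rank, Module.finrank]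
  rw [h4, ← hA] at *
  calc (LinearMap.rank A.toLin').toNat ≤ (1 : Cardinal).toNat :=
        Cardinal.toNat_le_toNat (hA ▸ h2) Cardinal.one_lt_aleph0
    _ = 1 := by simp

private lemma myColRank (A : Matrix V V ℚ) (c : V) (h : ∀ v w, A v w ≠ 0 → w = c) :
    A.rank ≤ 1 := by
  rw [← Matrix.rank_transpose]
  exact myRowRank Aᵀ c (fun v w h0 => h w v h0)

private lemma myStarRank (A : Matrix V V ℚ) (c : V) (h : ∀ v w, A v w ≠ 0 → v = c ∨ w = c) :
    A.rank ≤ 2 := by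
  set B : Matrix V V ℚ := Matrix.of (fun v w => if v = c then A v w else 0) with hB
  set C : Matrix V V ℚ := Matrix.of (fun v w => if v = c then 0 else A v w) with hC
  have hBC : A = B + C := by
    ext v w; by_cases hv : v = c <;> simp [hB, hC, hv]
  have h1 : B.rank ≤ 1 := by
    refine myRowRank B c ?_
    intro v w h0
    by_contra hv
    simp [hB, hv] at h0
  have h2 : C.rank ≤ 1 := by
    refine myColRank C c ?_
    intro v w h0
    have hv : v ≠ c := by intro hv; simp [hC, hv] at h0
    have h0' : A v w ≠ 0 := by simpa [hC, hv] using h0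
    exact (h v w h0').resolve_left hv
  calc A.rank = (B + C).rank := by rw [← hBC]
    _ ≤ B.rank + C.rank := myRankAdd _ _
    _ ≤ 2 := by omega

private lemma mySubRank (A : Matrix V V ℚ) {n : ℕ} (f : Fin n → V)
    (hdet : (A.submatrix f f).det ≠ 0) : n ≤ A.rank := by
  set P : Matrix (Fin n) V ℚ := Matrix.of (fun i v => if f i = v then 1 else 0) with hP
  set Q : Matrix V (Fin n) ℚ := Matrix.of (fun v j => if v = f j then 1 else 0) with hQ
  have h1 : P * A = A.submatrix f id := by
    ext i w
    simp [Matrix.mul_apply, hP, ite_mul, one_mul, zero_mul]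
  have h2 : A.submatrix f id * Q = A.submatrix f f := by
    ext i j
    simp [Matrix.mul_apply, hQ, mul_ite, mul_one, mul_zero]
  have hPQ : A.submatrix f f = P * A * Q := by rw [h1, h2]
  have h3 : (A.submatrix f f).rank = n := by
    rw [Matrix.rank_of_isUnit _ ((Matrix.isUnit_iff_isUnit_det _).mpr
      (isUnit_iff_ne_zero.mpr hdet))]
    simp
  calc n = (A.submatrix f f).rank := h3.symm
    _ = (P * A * Q).rank := by rw [hPQ]
    _ = (P * (A * Q)).rank := by rw [Matrix.mul_assoc]
    _ ≤ (A * Q).rank := Matrix.rank_mul_le_right _ _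
    _ ≤ A.rank := Matrix.rank_mul_le_left _ _

private lemma mySumRank : ∀ (k : ℕ) (T : Fin k → Matrix V V ℚ),
    (∀ i, (T i).rank ≤ 2) → (∑ i, T i).rank ≤ 2 * k := by
  intro k
  induction k with
  | zero => intro T _; simp
  | succ k ih =>
    intro T hT
    rw [Fin.sum_univ_succ]
    calc (T 0 + ∑ i : Fin k, T i.succ).rank ≤ (T 0).rank + (∑ i : Fin k, T i.succ).rank :=
          myRankAdd _ _
      _ ≤ 2 + 2 * k := add_le_add (hT 0) (ih _ (fun i => hT i.succ))
      _ = 2 * (k + 1) := by ring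

private lemma myLeaf (Γ : SimpleGraph V) (hac : Γ.IsAcyclic) (M : Matrix V V ℤ)
    (hM : M.transpose = -M) (hsupp : ∀ v w, M v w ≠ 0 → Γ.Adj v w)
    (hne : M ≠ 0) :
    ∃ v u, M v u ≠ 0 ∧ ∀ w, M v w ≠ 0 → w = u := by
  classical
  have hskew : ∀ v w, M w v = -M v w := by
    intro v w
    simpa [Matrix.transpose_apply, Matrix.neg_apply] using congrFun (congrFun hM v) w
  set Γ' : SimpleGraph V :=
    { Adj := fun v w => M v w ≠ 0
      symm := by
        refine ⟨fun v w h => ?_⟩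
        rw [hskew]
        simpa using h
      loopless := by
        refine ⟨fun v h => ?_⟩
        have := hskew v v
        omega } with hΓ'
  have hadj' : ∀ v w, Γ'.Adj v w ↔ M v w ≠ 0 := fun _ _ => Iff.rfl
  have hle : Γ' ≤ Γ := fun {v w} h => hsupp v w h
  have hac' : Γ'.IsAcyclic := by
    intro v c hc
    exact hac (c.mapLe hle) (hc.mapLe hle)
  letI : DecidableRel Γ'.Adj := fun v w => Classical.dec _
  obtain ⟨a, b, hab⟩ : ∃ a b, M a b ≠ 0 := by
    by_contra h
    push_neg at h
    exact hne (by ext v w; simpa using h v w)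
  haveI : Nonempty (Σ u : V, Σ v : V, Γ'.Path u v) :=
    ⟨⟨a, b, SimpleGraph.Path.singleton ((hadj' a b).mpr hab)⟩⟩
  obtain ⟨⟨u, v, p⟩, hmax⟩ :=
    Finite.exists_max (fun t : Σ u : V, Σ v : V, Γ'.Path u v => (t.2.2 : Γ'.Walk t.1 t.2.1).length)
  -- p is a maximal-length path, from u to v
  have hlen1 : 1 ≤ (p : Γ'.Walk u v).length := by
    have := hmax ⟨a, b, SimpleGraph.Path.singleton ((hadj' a b).mpr hab)⟩
    simpa [SimpleGraph.Path.singleton] using this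
  -- work with the reverse walk q : v → u
  set q : Γ'.Walk v u := (p : Γ'.Walk u v).reverse with hq
  have hqpath : q.IsPath := (p.2).reverse
  have hqlen : q.length = (p : Γ'.Walk u v).length := SimpleGraph.Walk.length_reverse _
  cases hq' : q with
  | nil =>
    rw [hq'] at hqlen
    simp at hqlen
    omega
  | @cons _ x _ h q' =>
    -- h : Γ'.Adj v x, q' : Γ'.Walk x u
    rw [hq'] at hqpath
    rw [SimpleGraph.Walk.cons_isPath_iff] at hqpath
    obtain ⟨hq'path, hvq'⟩ := hqpath
    refine ⟨v, x, h, ?_⟩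
    intro w hw
    by_contra hwx
    have hadjvw : Γ'.Adj v w := hw
    by_cases hws : w ∈ (SimpleGraph.Walk.cons h q').support
    · -- cycle case
      rw [SimpleGraph.Walk.support_cons] at hws
      have hwv : w ≠ v := fun hh => Γ'.loopless.irrefl v (hh ▸ hadjvw)
      have hws' : w ∈ q'.support := by
        rcases List.mem_cons.mp hws with hws | hws
        · exact absurd hws hwv
        · exact hws
      set r : Γ'.Walk x w := q'.takeUntil w hws' with hr
      have hrpath : r.IsPath := hq'path.takeUntil hws'
      have hvr : v ∉ r.support := fun hh => hvq' (q'.support_takeUntil_subset hws' hh)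
      have hcr : (SimpleGraph.Walk.cons h r).IsPath :=
        (SimpleGraph.Walk.cons_isPath_iff h r).mpr ⟨hrpath, hvr⟩
      set pr : Γ'.Walk w v := (SimpleGraph.Walk.cons h r).reverse with hpr
      have hprpath : pr.IsPath := hcr.reverse
      have hedge : s(v, w) ∉ pr.edges := by
        intro hh
        rw [hpr, SimpleGraph.Walk.edges_reverse, List.mem_reverse] at hh
        rw [SimpleGraph.Walk.edges_cons] at hh
        rcases List.mem_cons.mp hh with hh | hh
        · rw [Sym2.eq_iff] at hh
          rcases hh with ⟨_, h2⟩ | ⟨h1, h2⟩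
          · exact hwx h2
          · exact hwv h2
        · exact hvr (r.fst_mem_support_of_mem_edges hh)
      have hcyc := SimpleGraph.Path.cons_isCycle (⟨pr, hprpath⟩ : Γ'.Path w v) hadjvw hedge
      exact hac' _ hcyc
    · -- extension case: longer path
      have hext : (SimpleGraph.Walk.cons (Γ'.symm.symm _ _ hadjvw) (SimpleGraph.Walk.cons h q')).IsPath := by
        rw [SimpleGraph.Walk.cons_isPath_iff]
        refine ⟨?_, hws⟩
        rw [← hq']
        exact (p.2).reverse
      have := hmax ⟨w, u, ⟨_, hext⟩⟩
      simp only at this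
      rw [SimpleGraph.Walk.length_cons] at this
      have hql : (SimpleGraph.Walk.cons h q').length = (p : Γ'.Walk u v).length := by
        rw [← hq']; exact hqlen
      omega

private lemma myZeroCase (Γ : SimpleGraph V) (M : Matrix V V ℤ) (h0 : M = 0) :
    ∃ (k : ℕ) (S : Fin k → Matrix V V ℤ),
      (∀ i, (S i).transpose = -(S i)) ∧
      (∀ i v w, S i v w ≠ 0 → Γ.Adj v w) ∧
      (∀ i, ∃ c : V, ∀ v w, S i v w ≠ 0 → v = c ∨ w = c) ∧
      (∑ i, S i) = M ∧
      ∃ f : Fin (2 * k) → V, ((M.map (Int.cast : ℤ → ℚ)).submatrix f f).det ≠ 0 := by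
  subst h0
  haveI : IsEmpty (Fin (2 * 0)) := ⟨fun i => i.elim0⟩
  refine ⟨0, fun i => i.elim0, fun i => i.elim0, fun i => i.elim0, fun i => i.elim0, by simp, ?_⟩
  refine ⟨fun i => isEmptyElim i, ?_⟩
  rw [Matrix.det_isEmpty]
  exact one_ne_zero

open Classical in
private lemma myKey (Γ : SimpleGraph V) (hac : Γ.IsAcyclic) :
    ∀ (n : ℕ) (M : Matrix V V ℤ),
      (Finset.univ.filter (fun v => ∃ w, M v w ≠ 0)).card ≤ n →
      M.transpose = -M → (∀ v w, M v w ≠ 0 → Γ.Adj v w) →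
      ∃ (k : ℕ) (S : Fin k → Matrix V V ℤ),
        (∀ i, (S i).transpose = -(S i)) ∧
        (∀ i v w, S i v w ≠ 0 → Γ.Adj v w) ∧
        (∀ i, ∃ c : V, ∀ v w, S i v w ≠ 0 → v = c ∨ w = c) ∧
        (∑ i, S i) = M ∧
        ∃ f : Fin (2 * k) → V, ((M.map (Int.cast : ℤ → ℚ)).submatrix f f).det ≠ 0 := by
  intro n
  induction n with
  | zero =>
    intro M hcard hM hsupp
    refine myZeroCase Γ M ?_
    ext v w
    by_contra h0
    have hv : v ∈ Finset.univ.filter (fun v => ∃ w, M v w ≠ 0) := by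
      simp only [Finset.mem_filter, Finset.mem_univ, true_and]
      exact ⟨w, by simpa using h0⟩
    have := Finset.card_pos.mpr ⟨v, hv⟩
    omega
  | succ n ih =>
    intro M hcard hM hsupp
    by_cases hM0 : M = 0
    · exact myZeroCase Γ M hM0
    obtain ⟨v, u, hvu, hleaf⟩ := myLeaf Γ hac M hM hsupp hM0
    have hvu' : v ≠ u := (hsupp v u hvu).ne
    have hskew : ∀ x y, M y x = -M x y := by
      intro x y
      simpa [Matrix.transpose_apply, Matrix.neg_apply] using congrFun (congrFun hM x) y
    set S₀ : Matrix V V ℤ := Matrix.of (fun x y => if x = u ∨ y = u then M x y else 0) with hS₀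
    set M' : Matrix V V ℤ := M - S₀ with hM'def
    have hM'e : ∀ x y, M' x y = if x = u ∨ y = u then 0 else M x y := by
      intro x y
      by_cases hxy : x = u ∨ y = u <;> simp [hM'def, hS₀, Matrix.sub_apply, hxy]
    have hM'skew : M'.transpose = -M' := by
      ext x y
      simp only [Matrix.transpose_apply, Matrix.neg_apply]
      rw [hM'e, hM'e]
      by_cases hx : x = u <;> by_cases hy : y = u <;> simp [hx, hy, hskew x y]
    have hM'supp : ∀ x y, M' x y ≠ 0 → Γ.Adj x y := by
      intro x y h0
      by_cases hxy : x = u ∨ y = u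
      · rw [hM'e, if_pos hxy] at h0; exact absurd rfl h0
      · exact hsupp x y (by rwa [hM'e, if_neg hxy] at h0)
    have hrowu : ∀ y, M' u y = 0 := fun y => by rw [hM'e]; simp
    have hrowv : ∀ y, M' v y = 0 := by
      intro y
      by_cases hy : y = u
      · rw [hM'e]; simp [hy]
      · rw [hM'e, if_neg (by simp [hvu', hy])]
        by_contra h0
        exact hy (hleaf y h0)
    -- diagonal and leaf facts over ℤ
    have hdiagv : M v v = 0 := by have := hskew v v; omega
    have hMvz : ∀ y, y ≠ u → M v y = 0 := by
      intro y hy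
      by_contra h0
      exact hy (hleaf y h0)
    -- cardinality decreases
    have hu_mem : u ∈ Finset.univ.filter (fun x => ∃ y, M x y ≠ 0) := by
      simp only [Finset.mem_filter, Finset.mem_univ, true_and]
      exact ⟨v, by rw [hskew v u]; simpa using hvu⟩
    have hsub : (Finset.univ.filter (fun x => ∃ y, M' x y ≠ 0)) ⊆
        (Finset.univ.filter (fun x => ∃ y, M x y ≠ 0)).erase u := by
      intro x hx
      simp only [Finset.mem_filter, Finset.mem_univ, true_and] at hx
      obtain ⟨y, hy⟩ := hx
      have hxy : ¬(x = u ∨ y = u) := by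
        intro hc
        rw [hM'e, if_pos hc] at hy
        exact hy rfl
      rw [Finset.mem_erase]
      refine ⟨fun hc => hxy (Or.inl hc), ?_⟩
      simp only [Finset.mem_filter, Finset.mem_univ, true_and]
      exact ⟨y, by rwa [hM'e, if_neg hxy] at hy⟩
    have hcard' : (Finset.univ.filter (fun x => ∃ y, M' x y ≠ 0)).card ≤ n := by
      have h1 := Finset.card_le_card hsub
      rw [Finset.card_erase_of_mem hu_mem] at h1
      omega
    obtain ⟨k, S, hSskew, hSadj, hSstar, hSsum, f, hdet⟩ := ih M' hcard' hM'skew hM'supp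
    -- range of f avoids u and v
    have hfu : ∀ i, f i ≠ u := by
      intro i hfi
      apply hdet
      apply Matrix.det_eq_zero_of_row_eq_zero i
      intro j
      simp [Matrix.submatrix_apply, Matrix.map_apply, hfi, hrowu]
    have hfv : ∀ i, f i ≠ v := by
      intro i hfi
      apply hdet
      apply Matrix.det_eq_zero_of_row_eq_zero i
      intro j
      simp [Matrix.submatrix_apply, Matrix.map_apply, hfi, hrowv]
    -- M agrees with M' away from u
    have hMM' : ∀ i j, M (f i) (f j) = M' (f i) (f j) := by
      intro i j
      rw [hM'e, if_neg (by simp [hfu i, hfu j])]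
    refine ⟨k + 1, Fin.cons S₀ S, ?_, ?_, ?_, ?_, ?_⟩
    · intro i
      refine Fin.cases ?_ (fun i => ?_) i
      · show S₀.transpose = -S₀
        ext x y
        simp only [Matrix.transpose_apply, Matrix.neg_apply, hS₀, Matrix.of_apply]
        by_cases hx : x = u <;> by_cases hy : y = u <;> simp [hx, hy] <;> exact hskew _ _
      · simpa only [Fin.cons_succ] using hSskew i
    · intro i
      refine Fin.cases ?_ (fun i => ?_) i
      · intro x y h0
        simp only [Fin.cons_zero, hS₀, Matrix.of_apply] at h0
        apply hsupp
        by_cases hxy : x = u ∨ y = u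
        · rwa [if_pos hxy] at h0
        · rw [if_neg hxy] at h0; exact absurd rfl h0
      · intro x y h0
        rw [Fin.cons_succ] at h0
        exact hSadj i x y h0
    · intro i
      refine Fin.cases ?_ (fun i => ?_) i
      · refine ⟨u, fun x y h0 => ?_⟩
        simp only [Fin.cons_zero, hS₀, Matrix.of_apply] at h0
        by_contra hc
        push_neg at hc
        rw [if_neg (by tauto)] at h0
        exact h0 rfl
      · rw [Fin.cons_succ]
        exact hSstar i
    · rw [Fin.sum_univ_succ]
      simp only [Fin.cons_zero, Fin.cons_succ]
      rw [hSsum, hM'def]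
      abel
    · -- determinant part
      have h2k : 2 * (k + 1) = 2 * k + 2 := by ring
      set g : Fin (2 * k + 2) → V := Fin.cons v (Fin.cons u f) with hg
      refine ⟨fun i => g (Fin.cast h2k i), ?_⟩
      have hsub2 : (M.map (Int.cast : ℤ → ℚ)).submatrix (fun i => g (Fin.cast h2k i))
            (fun i => g (Fin.cast h2k i))
          = ((M.map (Int.cast : ℤ → ℚ)).submatrix g g).submatrix (finCongr h2k) (finCongr h2k) :=
        rfl
      rw [hsub2, Matrix.det_submatrix_equiv_self]
      set N : Matrix (Fin (2 * k + 2)) (Fin (2 * k + 2)) ℚ :=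
        (M.map (Int.cast : ℤ → ℚ)).submatrix g g with hN
      have hNe : ∀ i j, N i j = ((M (g i) (g j) : ℤ) : ℚ) := fun i j => rfl
      have hg0 : g 0 = v := rfl
      have hg1 : g 1 = u := by
        rw [hg, ← Fin.succ_zero_eq_one, Fin.cons_succ, Fin.cons_zero]
      have hgss : ∀ i : Fin (2 * k), g i.succ.succ = f i := fun i => by
        rw [hg, Fin.cons_succ, Fin.cons_succ]
      -- row 0 facts
      have hrow0 : ∀ j : Fin (2 * k + 2), j ≠ 1 → N 0 j = 0 := by
        intro j hj
        refine Fin.cases ?_ (fun j' => ?_) j hj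
        · intro _
          rw [hNe, hg0, hdiagv]
          simp
        · intro hj'
          refine Fin.cases ?_ (fun j'' => ?_) j' hj'
          · intro hc
            exact absurd (Fin.succ_zero_eq_one) hc
          · intro _
            rw [hNe, hg0, hgss, hMvz _ (hfu j'')]
            simp
      have hval1 : ((1 : Fin (2 * k + 2)) : ℕ) = 1 := rfl
      have hdetN : N.det =
          (-1) ^ ((1 : Fin (2 * k + 2)) : ℕ) * N 0 1 *
            (N.submatrix Fin.succ (1 : Fin (2 * k + 2)).succAbove).det := by
        rw [Matrix.det_succ_row_zero]
        exact Finset.sum_eq_single_of_mem _ (Finset.mem_univ _)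
          (fun j _ hj => by rw [hrow0 j hj]; ring)
      set N₁ : Matrix (Fin (2 * k + 1)) (Fin (2 * k + 1)) ℚ :=
        N.submatrix Fin.succ (1 : Fin (2 * k + 2)).succAbove with hN₁
      have hsA0 : (1 : Fin (2 * k + 2)).succAbove 0 = 0 := by
        rw [Fin.succAbove_of_castSucc_lt _ _ (by simp [Fin.lt_def]), Fin.castSucc_zero]
      have hcol0 : ∀ i : Fin (2 * k + 1), i ≠ 0 → N₁ i 0 = 0 := by
        intro i hi
        refine Fin.cases ?_ (fun i' => ?_) i hi
        · intro hc
          exact absurd rfl hc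
        · intro _
          rw [hN₁, Matrix.submatrix_apply, hsA0, hNe, hgss, hg0]
          have hz : M (f i') v = 0 := by rw [hskew v (f i'), hMvz _ (hfu i')]; ring
          rw [hz]
          simp
      have hdetN₁ : N₁.det =
          (-1) ^ ((0 : Fin (2 * k + 1)) : ℕ) * N₁ 0 0 *
            (N₁.submatrix (0 : Fin (2 * k + 1)).succAbove Fin.succ).det := by
        rw [Matrix.det_succ_column_zero]
        exact Finset.sum_eq_single_of_mem _ (Finset.mem_univ _)
          (fun i _ hi => by rw [hcol0 i hi]; ring)
      have hN₁00 : N₁ 0 0 = ((-M v u : ℤ) : ℚ) := by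
        rw [hN₁, Matrix.submatrix_apply, hsA0, hNe, Fin.succ_zero_eq_one, hg1, hg0]
        rw [hskew v u]
      have hN01 : N 0 1 = ((M v u : ℤ) : ℚ) := by rw [hNe, hg0, hg1]
      have hsA1 : ∀ j : Fin (2 * k), (1 : Fin (2 * k + 2)).succAbove j.succ = j.succ.succ := by
        intro j
        rw [Fin.succAbove_of_le_castSucc]
        simp [Fin.le_def]
      have hN₂ : N₁.submatrix (0 : Fin (2 * k + 1)).succAbove Fin.succ =
          (M'.map (Int.cast : ℤ → ℚ)).submatrix f f := by
        ext i j
        rw [Fin.succAbove_zero, hN₁]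
        simp only [Matrix.submatrix_apply]
        rw [hsA1, hNe, hgss, hgss, hMM']
        rfl
      rw [hdetN, hdetN₁, hN₂, hN01, hN₁00]
      have ha : ((M v u : ℤ) : ℚ) ≠ 0 := Int.cast_ne_zero.mpr hvu
      refine mul_ne_zero ?_ (mul_ne_zero ?_ hdet)
      · simpa using ha
      · simpa using ha

end StarCoverHelpers

/-- Let `Γ` be a finite tree with an integer edge labelling of full support, encoded as a
skew-symmetric connection matrix `M` whose nonzero entries are exactly at adjacent pairs.
The minimal number of labelled stars (labelled subgraphs of `Γ` all of whose edges share a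
common vertex) whose labels sum to the given labelling equals half the rank of `M`. -/
theorem star_cover_number_eq_half_rank {V : Type} [Fintype V] [DecidableEq V]
    (Γ : SimpleGraph V) (hT : Γ.IsTree)
    (M : Matrix V V ℤ) (hM : M.transpose = -M)
    (hsupp : ∀ v w, M v w ≠ 0 ↔ Γ.Adj v w) :
    ∃ k₀ : ℕ,
      IsLeast {k : ℕ | ∃ S : Fin k → Matrix V V ℤ,
        (∀ i, (S i).transpose = -(S i)) ∧
        (∀ i v w, S i v w ≠ 0 → Γ.Adj v w) ∧
        (∀ i, ∃ c : V, ∀ v w, S i v w ≠ 0 → v = c ∨ w = c) ∧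
        (∑ i, S i) = M} k₀ ∧
      2 * k₀ = (M.map (Int.cast : ℤ → ℚ)).rank := by
  classical
  obtain ⟨k₀, S, hskew, hadj, hstar, hsum, f, hdet⟩ :=
    myKey Γ hT.IsAcyclic (Fintype.card V) M
      ((Finset.card_filter_le _ _).trans (le_of_eq Finset.card_univ)) hM
      (fun v w h => (hsupp v w).mp h)
  have hub : ∀ k ∈ {k : ℕ | ∃ S : Fin k → Matrix V V ℤ,
        (∀ i, (S i).transpose = -(S i)) ∧
        (∀ i v w, S i v w ≠ 0 → Γ.Adj v w) ∧
        (∀ i, ∃ c : V, ∀ v w, S i v w ≠ 0 → v = c ∨ w = c) ∧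
        (∑ i, S i) = M}, (M.map (Int.cast : ℤ → ℚ)).rank ≤ 2 * k := by
    rintro k ⟨T, hTskew, hTadj, hTstar, hTsum⟩
    have hmap : M.map (Int.cast : ℤ → ℚ) = ∑ i, (T i).map (Int.cast : ℤ → ℚ) := by
      ext v w
      rw [Matrix.map_apply, ← hTsum]
      simp only [Matrix.sum_apply, Matrix.map_apply]
      push_cast
      rfl
    rw [hmap]
    apply mySumRank
    intro i
    obtain ⟨c, hc⟩ := hTstar i
    apply myStarRank _ c
    intro v w h0
    exact hc v w (by simpa [Matrix.map_apply] using h0)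
  have hmem : k₀ ∈ {k : ℕ | ∃ S : Fin k → Matrix V V ℤ,
        (∀ i, (S i).transpose = -(S i)) ∧
        (∀ i v w, S i v w ≠ 0 → Γ.Adj v w) ∧
        (∀ i, ∃ c : V, ∀ v w, S i v w ≠ 0 → v = c ∨ w = c) ∧
        (∑ i, S i) = M} := ⟨S, hskew, hadj, hstar, hsum⟩
  have hge : 2 * k₀ ≤ (M.map (Int.cast : ℤ → ℚ)).rank := mySubRank _ f hdet
  exact ⟨k₀, ⟨hmem, fun k hk => by have := hub k hk; omega⟩,
    le_antisymm hge (hub k₀ hmem)⟩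
end

section
/- Let Γ be a finite tree, v a leaf of Γ with unique neighbour w, and let M be a skew-symmetric integer matrix indexed by V(Γ) supported on edges of Γ (M_{x,y} = 0 unless {x,y} ∈ E(Γ)) with M_{v,w} ≠ 0. Let M' be the submatrix of M on V(Γ) \ {v, w}. Then rank M ≥ 2 + rank M'. -/
open Matrix

/-- The submodule `p.prod q` is linearly equivalent to `p × q`. -/
def prodSubEquiv {R M N : Type*} [Ring R] [AddCommGroup M] [AddCommGroup N]
    [Module R M] [Module R N] (p : Submodule R M) (q : Submodule R N) :
    (p.prod q) ≃ₗ[R] p × q where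
  toFun x := (⟨x.1.1, x.2.1⟩, ⟨x.1.2, x.2.2⟩)
  invFun x := ⟨(x.1.1, x.2.1), ⟨x.1.2, x.2.2⟩⟩
  left_inv x := rfl
  right_inv x := rfl
  map_add' x y := rfl
  map_smul' c x := rfl

lemma finrank_prod_submodule {K M N : Type*} [Field K] [AddCommGroup M] [AddCommGroup N]
    [Module K M] [Module K N] [FiniteDimensional K M] [FiniteDimensional K N]
    (p : Submodule K M) (q : Submodule K N) :
    Module.finrank K (p.prod q) = Module.finrank K p + Module.finrank K q := by
  rw [(prodSubEquiv p q).finrank_eq, Module.finrank_prod]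

lemma rank_fromBlocks_diag {K m n : Type*} [Field K] [Fintype m] [Fintype n]
    [DecidableEq m] [DecidableEq n] (A : Matrix m m K) (D : Matrix n n K) :
    (fromBlocks A 0 0 D).rank = A.rank + D.rank := by
  rw [Matrix.rank, Matrix.rank, Matrix.rank]
  let e := LinearEquiv.sumArrowLequivProdArrow m n K K
  have key : Submodule.map (e : (m ⊕ n → K) →ₗ[K] (m → K) × (n → K))
      (LinearMap.range (fromBlocks A 0 0 D).mulVecLin)
      = (LinearMap.range A.mulVecLin).prod (LinearMap.range D.mulVecLin) := by
    ext uv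
    simp only [Submodule.mem_map, LinearMap.mem_range, Submodule.mem_prod]
    constructor
    · rintro ⟨-, ⟨x, rfl⟩, rfl⟩
      constructor
      · exact ⟨x ∘ Sum.inl, by
          simp [e, mulVecLin_apply, fromBlocks_mulVec,
            LinearEquiv.sumArrowLequivProdArrow, Equiv.sumArrowEquivProdArrow]⟩
      · exact ⟨x ∘ Sum.inr, by
          simp [e, mulVecLin_apply, fromBlocks_mulVec,
            LinearEquiv.sumArrowLequivProdArrow, Equiv.sumArrowEquivProdArrow]⟩
    · rintro ⟨⟨x, hx⟩, ⟨y, hy⟩⟩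
      refine ⟨(fromBlocks A 0 0 D).mulVecLin (Sum.elim x y), ⟨Sum.elim x y, rfl⟩, ?_⟩
      apply Prod.ext <;>
        simp [e, mulVecLin_apply, fromBlocks_mulVec,
          LinearEquiv.sumArrowLequivProdArrow, Equiv.sumArrowEquivProdArrow, Sum.elim_comp_inl, Sum.elim_comp_inr,
          ← hx, ← hy]
  rw [← LinearEquiv.finrank_map_eq e, key, finrank_prod_submodule]

/-- Let `Γ` be a finite tree, `v` a leaf with unique neighbour `w`, and `M` a skew-symmetric
integer matrix supported on the edges of `Γ` with `M_{v,w} ≠ 0`.  If `M'` denotes the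
submatrix of `M` on `V(Γ) \ {v, w}`, then `rank M ≥ 2 + rank M'` (ranks over `ℚ`). -/
theorem rank_leaf_reduction {V : Type} [Fintype V] [DecidableEq V]
    (Γ : SimpleGraph V) (hT : Γ.IsTree)
    (v w : V) (hvw : Γ.Adj v w) (hleaf : ∀ x, Γ.Adj v x → x = w)
    (M : Matrix V V ℤ) (hM : M.transpose = -M)
    (hsupp : ∀ x y, ¬ Γ.Adj x y → M x y = 0)
    (hne : M v w ≠ 0) :
    2 + ((M.submatrix (fun x : {u : V // u ≠ v ∧ u ≠ w} => (x : V))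
          (fun x : {u : V // u ≠ v ∧ u ≠ w} => (x : V))).map (Int.cast : ℤ → ℚ)).rank
      ≤ (M.map (Int.cast : ℤ → ℚ)).rank := by
  classical
  set N : Matrix V V ℚ := M.map (Int.cast : ℤ → ℚ) with hN
  have hvw' : v ≠ w := hvw.ne
  have hskew : ∀ x y, M x y = - M y x := by
    intro x y
    have := congrFun (congrFun hM y) x
    simpa [Matrix.transpose_apply] using this
  have hrow : ∀ x, x ≠ w → M v x = 0 := fun x hx =>
    hsupp v x (fun h => hx (hleaf x h))
  have hcol : ∀ x, x ≠ w → M x v = 0 := by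
    intro x hx
    rw [hskew x v, hrow x hx, neg_zero]
  have hww : M w w = 0 := by have := hskew w w; omega
  set a : ℚ := ((M v w : ℤ) : ℚ) with ha
  have haz : a ≠ 0 := by simpa [ha] using hne
  set S := {u : V // u ≠ v ∧ u ≠ w} with hS
  let e : (Fin 2 ⊕ S) ≃ V :=
    { toFun := Sum.elim ![v, w] Subtype.val
      invFun := fun u => if h1 : u = v then Sum.inl 0 else if h2 : u = w then Sum.inl 1
        else Sum.inr ⟨u, h1, h2⟩
      left_inv := by
        rintro (i | x)
        · fin_cases i <;> simp [hvw', Ne.symm hvw']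
        · simp [x.2.1, x.2.2]
      right_inv := by
        intro u
        by_cases h1 : u = v
        · simp [h1]
        · by_cases h2 : u = w <;> simp [h1, h2, Ne.symm hvw'] }
  let A : Matrix (Fin 2) (Fin 2) ℚ := !![0, a; -a, 0]
  let B : Matrix (Fin 2) S ℚ := Matrix.of fun i x => N (![v, w] i) x
  let C : Matrix S (Fin 2) ℚ := Matrix.of fun x i => N x (![v, w] i)
  let D : Matrix S S ℚ := N.submatrix Subtype.val Subtype.val
  have hNe : N.submatrix e e = fromBlocks A B C D := by
    ext i j
    rcases i with i | x <;> rcases j with j | y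
    · fin_cases i <;> fin_cases j <;>
        simp [N, A, e, hrow v hvw', hww, hskew w v, a]
    · rfl
    · rfl
    · rfl
  letI : Invertible A := ⟨!![0, -a⁻¹; a⁻¹, 0], by
      rw [show A = !![0, a; -a, 0] from rfl, Matrix.mul_fin_two, Matrix.one_fin_two]
      field_simp; simp, by
      rw [show A = !![0, a; -a, 0] from rfl, Matrix.mul_fin_two, Matrix.one_fin_two]
      field_simp; simp⟩
  have hinv : (⅟A : Matrix (Fin 2) (Fin 2) ℚ) = !![0, -a⁻¹; a⁻¹, 0] := rfl
  have hB0 : ∀ y : S, B 0 y = 0 := by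
    intro y
    show ((M v (y : V) : ℤ) : ℚ) = 0
    rw [hrow _ y.2.2]; simp
  have hC0 : ∀ x : S, C x 0 = 0 := by
    intro x
    show ((M (x : V) v : ℤ) : ℚ) = 0
    rw [hcol _ x.2.2]; simp
  have hCAB : C * ⅟A * B = 0 := by
    ext x y
    simp [Matrix.mul_apply, Fin.sum_univ_two, hinv, hB0, hC0]
  have hAunit : IsUnit A.det := A.isUnit_det_of_invertible
  have hL : IsUnit (fromBlocks (1 : Matrix (Fin 2) (Fin 2) ℚ) 0 (C * ⅟A) 1).det := by
    rw [← Matrix.isUnit_iff_isUnit_det, Matrix.isUnit_fromBlocks_zero₁₂]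
    exact ⟨isUnit_one, isUnit_one⟩
  have hR : IsUnit (fromBlocks (1 : Matrix (Fin 2) (Fin 2) ℚ) (⅟A * B) 0 1).det := by
    rw [← Matrix.isUnit_iff_isUnit_det, Matrix.isUnit_fromBlocks_zero₂₁]
    exact ⟨isUnit_one, isUnit_one⟩
  have hrank : N.rank = 2 + D.rank := by
    rw [← Matrix.rank_submatrix N e e, hNe, fromBlocks_eq_of_invertible₁₁ A B C D,
      Matrix.rank_mul_eq_left_of_isUnit_det _ _ hR,
      Matrix.rank_mul_eq_right_of_isUnit_det _ _ hL,
      hCAB, sub_zero, rank_fromBlocks_diag,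
      Matrix.rank_of_isUnit A (isUnit_of_invertible A)]
    simp
  calc 2 + ((M.submatrix (fun x : S => (x : V)) (fun x : S => (x : V))).map
          (Int.cast : ℤ → ℚ)).rank
      = 2 + D.rank := rfl
    _ ≤ N.rank := le_of_eq hrank.symm
end

section
/- Let Γ be a finite forest (acyclic simple graph) and M a skew-symmetric integer matrix indexed by V(Γ) supported on the edges of Γ (M_{x,y} = 0 if {x,y} ∉ E(Γ)). Then (1/2)·rank M equals the minimal size of a set S of vertices such that every edge {x,y} with M_{x,y} ≠ 0 has an endpoint in S (a vertex cover of the support). -/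
open Finset Matrix Module

section aux

variable {V : Type} [Fintype V] [DecidableEq V]

/-- In a finite acyclic graph with an edge, there is a leaf `v` with unique neighbor `u`. -/
lemma forest_exists_leaf {G : SimpleGraph V} (hG : G.IsAcyclic)
    {a b : V} (hab : G.Adj a b) :
    ∃ u v : V, G.Adj u v ∧ ∀ w, G.Adj w v → w = u := by
  classical
  set N := Fintype.card V with hN
  set P : ℕ → Prop := fun n => ∃ (x y : V) (p : G.Walk x y), p.IsPath ∧ p.length = n with hP
  have h1 : P 1 := ⟨a, b, (SimpleGraph.Path.singleton hab).1,
    (SimpleGraph.Path.singleton hab).2, rfl⟩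
  have : Nonempty V := ⟨a⟩
  have h1N : 1 ≤ N := Fintype.card_pos
  obtain ⟨x, y, p, hp, hlen⟩ : P (Nat.findGreatest P N) := Nat.findGreatest_spec h1N h1
  have hge1 : 1 ≤ Nat.findGreatest P N := Nat.le_findGreatest h1N h1
  have hlp : 0 < p.length := by omega
  have hadj0 : G.Adj (p.getVert 0) (p.getVert 1) := p.adj_getVert_succ hlp
  rw [p.getVert_zero] at hadj0
  refine ⟨p.getVert 1, x, hadj0.symm, ?_⟩
  intro w hw
  have hwmem : w ∈ p.support := by
    by_contra hns
    have hqp : (SimpleGraph.Walk.cons hw p).IsPath := hp.cons hns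
    have hlt : (SimpleGraph.Walk.cons hw p).length < N := hqp.length_lt
    have : (SimpleGraph.Walk.cons hw p).length ≤ Nat.findGreatest P N :=
      Nat.le_findGreatest (le_of_lt hlt) ⟨w, y, _, hqp, rfl⟩
    simp only [SimpleGraph.Walk.length_cons, hlen] at this
    omega
  have hq1 : (p.takeUntil w hwmem).IsPath := hp.takeUntil hwmem
  have huniq : (⟨p.takeUntil w hwmem, hq1⟩ : G.Path x w) = SimpleGraph.Path.singleton hw.symm :=
    hG.path_unique _ _
  have hq1len : (p.takeUntil w hwmem).length = 1 := by
    have := congrArg (fun q : G.Path x w => q.1.length) huniq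
    simpa [SimpleGraph.Path.singleton] using this
  have hspec := p.take_spec hwmem
  have := congrArg (fun q : G.Walk x y => q.getVert 1) hspec
  simp only [SimpleGraph.Walk.getVert_append, hq1len] at this
  have h2 : p.getVert 1 = w := by simpa using this.symm
  exact h2.symm

/-- The key induction: for a skew-symmetric integer matrix supported on a forest there is
a vertex cover `S` of its support and a set `T` of at least `2 * S.card` vertices whose
columns are linearly independent over `ℚ`. -/
lemma key_induction (Γ : SimpleGraph V) (hforest : Γ.IsAcyclic) (n : ℕ) :
    ∀ (M : Matrix V V ℤ), M.transpose = -M → (∀ v w, ¬ Γ.Adj v w → M v w = 0) →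
    (Finset.univ.filter (fun p : V × V => M p.1 p.2 ≠ 0)).card ≤ n →
    ∃ S T : Finset V, (∀ v w, M v w ≠ 0 → v ∈ S ∨ w ∈ S) ∧ 2 * S.card ≤ T.card ∧
      ∀ c : V → ℚ, (∀ i, ∑ t ∈ T, c t * (M i t : ℚ) = 0) → ∀ t ∈ T, c t = 0 := by
  classical
  induction n with
  | zero =>
      intro M hM hsupp hcard
      refine ⟨∅, ∅, ?_, by simp, ?_⟩
      · intro v w hvw
        exfalso
        have : (v, w) ∈ Finset.univ.filter (fun p : V × V => M p.1 p.2 ≠ 0) := by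
          simp [hvw]
        have := Finset.card_pos.2 ⟨_, this⟩
        omega
      · intro c hc t ht
        simp at ht
  | succ n ih =>
      intro M hM hsupp hcard
      have hskew : ∀ x y, M x y = - M y x := by
        intro x y
        have h := congrFun (congrFun hM y) x
        simpa using h
      by_cases hzero : ∀ v w, M v w = 0
      · refine ⟨∅, ∅, ?_, by simp, ?_⟩
        · intro v w hvw; exact absurd (hzero v w) hvw
        · intro c hc t ht; simp at ht
      push_neg at hzero
      obtain ⟨u₀, v₀, huv₀⟩ := hzero
      -- the support graph
      have hdiag : ∀ x, M x x = 0 := by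
        intro x; have := hskew x x; omega
      set H : SimpleGraph V :=
        { Adj := fun x y => M x y ≠ 0
          symm := by
            constructor
            intro x y hxy
            rw [hskew y x]
            simpa using hxy
          loopless := by constructor; intro x hx; exact hx (hdiag x) } with hH
      have hle : H ≤ Γ := by
        intro x y hxy
        by_contra hc
        exact hxy (hsupp x y hc)
      have hHacyclic : H.IsAcyclic := fun v c hc =>
        hforest (c.mapLe hle) (hc.mapLe hle)
      obtain ⟨u, v, huv, hleaf⟩ := forest_exists_leaf hHacyclic (show H.Adj u₀ v₀ from huv₀)
      -- huv : M u v ≠ 0, hleaf : ∀ w, M w v ≠ 0 → w = u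
      have huv' : M u v ≠ 0 := huv
      have hleaf' : ∀ w, M w v ≠ 0 → w = u := hleaf
      have huvne : u ≠ v := fun h => huv' (h ▸ hdiag v)
      -- the reduced matrix
      set M' : Matrix V V ℤ :=
        Matrix.of (fun x y => if x = u ∨ x = v ∨ y = u ∨ y = v then (0 : ℤ) else M x y)
        with hM'def
      have hM'apply : ∀ x y, M' x y = if x = u ∨ x = v ∨ y = u ∨ y = v then (0 : ℤ) else M x y :=
        fun x y => rfl
      have hM'skew : M'.transpose = -M' := by
        ext x y
        simp only [Matrix.transpose_apply, Matrix.neg_apply, hM'apply]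
        by_cases h : x = u ∨ x = v ∨ y = u ∨ y = v
        · rw [if_pos (by tauto), if_pos h]; ring
        · rw [if_neg (by tauto), if_neg h]
          rw [hskew y x]
      have hM'supp : ∀ x y, ¬ Γ.Adj x y → M' x y = 0 := by
        intro x y hxy
        rw [hM'apply]
        split_ifs with h
        · rfl
        · exact hsupp x y hxy
      have hM'sub : ∀ x y, M' x y ≠ 0 → M x y ≠ 0 := by
        intro x y h
        rw [hM'apply] at h
        split_ifs at h with hc
        · exact absurd rfl h
        · exact h
      have hM'uv : M' u v = 0 := by rw [hM'apply]; simp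
      have hM'card : (Finset.univ.filter (fun p : V × V => M' p.1 p.2 ≠ 0)).card ≤ n := by
        have hss : (Finset.univ.filter (fun p : V × V => M' p.1 p.2 ≠ 0)) ⊂
            (Finset.univ.filter (fun p : V × V => M p.1 p.2 ≠ 0)) := by
          constructor
          · intro p hp
            simp only [Finset.mem_filter, Finset.mem_univ, true_and] at hp ⊢
            exact hM'sub _ _ hp
          · intro hsub
            have h1 : (u, v) ∈ (Finset.univ.filter (fun p : V × V => M p.1 p.2 ≠ 0)) := by
              simp [huv']
            have h2 := hsub h1
            simp only [Finset.mem_filter, Finset.mem_univ, true_and] at h2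
            exact h2 hM'uv
        have := Finset.card_lt_card hss
        omega
      obtain ⟨S', T', hcov', hcard', hLI'⟩ := ih M' hM'skew hM'supp hM'card
      -- u and v are not in T'
      have hrowzero2 : ∀ i, (i = u ∨ i = v) → ∀ t, M' i t = 0 := by
        intro i hi t
        rw [hM'apply]
        rcases hi with h | h <;> simp [h]
      have hrowzero : ∀ z, (z = u ∨ z = v) → ∀ i, M' i z = 0 := by
        intro z hz i
        rw [hM'apply]
        rcases hz with h | h <;> simp [h]
      have hnotT' : ∀ z, (z = u ∨ z = v) → z ∉ T' := by
        intro z hz hmem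
        have := hLI' (fun x => if x = z then 1 else 0) ?_ z hmem
        · simp at this
        · intro i
          rw [Finset.sum_eq_single z]
          · simp [hrowzero z hz i]
          · intro b _ hb; simp [hb]
          · intro h; exact absurd hmem h
      have huT' : u ∉ T' := hnotT' u (Or.inl rfl)
      have hvT' : v ∉ T' := hnotT' v (Or.inr rfl)
      refine ⟨insert u S', insert u (insert v T'), ?_, ?_, ?_⟩
      · -- cover
        intro x y hxy
        by_cases hxu : x = u
        · exact Or.inl (by simp [hxu])
        by_cases hyu : y = u
        · exact Or.inr (by simp [hyu])
        by_cases hxv : x = v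
        · exfalso
          apply hyu
          have : M y x ≠ 0 := by rw [hskew y x]; simpa using hxy
          exact hleaf' y (hxv ▸ this)
        by_cases hyv : y = v
        · exact absurd (hleaf' x (hyv ▸ hxy)) hxu
        have : M' x y ≠ 0 := by
          rw [hM'apply, if_neg (by tauto)]; exact hxy
        rcases hcov' x y this with h | h
        · exact Or.inl (Finset.mem_insert_of_mem h)
        · exact Or.inr (Finset.mem_insert_of_mem h)
      · -- cardinalities
        have hT : (insert u (insert v T')).card = T'.card + 2 := by
          rw [Finset.card_insert_of_notMem (by simp [huT', huvne]),
            Finset.card_insert_of_notMem hvT']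
        have hS : (insert u S').card ≤ S'.card + 1 := Finset.card_insert_le _ _
        omega
      · -- linear independence
        intro c hc
        have hsum : ∀ i, c u * (M i u : ℚ) + (c v * (M i v : ℚ) +
            ∑ t ∈ T', c t * (M i t : ℚ)) = 0 := by
          intro i
          have := hc i
          rwa [Finset.sum_insert (by simp [huT', huvne]),
            Finset.sum_insert hvT'] at this
        have hMvu : (M v u : ℚ) ≠ 0 := by
          have : M v u ≠ 0 := by rw [hskew v u]; simpa using huv'
          exact_mod_cast Int.cast_ne_zero.mpr this
        have hvT'zero : ∀ t ∈ T', (M v t : ℚ) = 0 := by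
          intro t ht
          by_contra h
          have hMvt : M v t ≠ 0 := fun h0 => h (by rw [h0]; simp)
          have hMtv : M t v ≠ 0 := by rw [hskew t v]; simpa using hMvt
          exact (hnotT' t (Or.inl (hleaf' t hMtv))) ht
        have hcu : c u = 0 := by
          have h := hsum v
          rw [hdiag v] at h
          have hz : ∑ t ∈ T', c t * (M v t : ℚ) = 0 :=
            Finset.sum_eq_zero fun t ht => by rw [hvT'zero t ht]; ring
          rw [hz] at h
          simp only [Int.cast_zero, mul_zero, zero_add, add_zero] at h
          exact (mul_eq_zero.mp h).resolve_right hMvu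
        have hT'zero : ∀ t ∈ T', c t = 0 := by
          apply hLI' c
          intro i
          by_cases hi : i = u ∨ i = v
          · apply Finset.sum_eq_zero
            intro t ht
            rw [hrowzero2 i hi t]
            simp
          · have h := hsum i
            have hMiv : (M i v : ℚ) = 0 := by
              have : M i v = 0 := by
                by_contra hne
                exact (by tauto : ¬ i = u) (hleaf' i hne)
              rw [this]; simp
            rw [hcu, hMiv] at h
            simp only [zero_mul, mul_zero, zero_add] at h
            calc ∑ t ∈ T', c t * (M' i t : ℚ)
                = ∑ t ∈ T', c t * (M i t : ℚ) := by
                  apply Finset.sum_congr rfl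
                  intro t ht
                  congr 1
                  rw [hM'apply, if_neg]
                  push_neg
                  exact ⟨by tauto, by tauto, fun h => (hnotT' t (Or.inl h)) ht,
                    fun h => (hnotT' t (Or.inr h)) ht⟩
              _ = 0 := h
        have hcv : c v = 0 := by
          have h := hsum u
          rw [hdiag u] at h
          have hz : ∑ t ∈ T', c t * (M u t : ℚ) = 0 :=
            Finset.sum_eq_zero fun t ht => by rw [hT'zero t ht]; ring
          rw [hz] at h
          simp only [Int.cast_zero, mul_zero, zero_add, add_zero] at h
          have hMuv : (M u v : ℚ) ≠ 0 := Int.cast_ne_zero.mpr huv'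
          exact (mul_eq_zero.mp h).resolve_right hMuv
        intro t ht
        rcases Finset.mem_insert.mp ht with h | h
        · rw [h]; exact hcu
        rcases Finset.mem_insert.mp h with h' | h'
        · rw [h']; exact hcv
        · exact hT'zero t h'

end aux

/-- Let `Γ` be a finite forest and `M` a skew-symmetric integer matrix indexed by `V(Γ)` and
supported on the edges of `Γ`.  Then half the rank of `M` (over `ℚ`) equals the minimal size
of a set of vertices meeting every edge `{x, y}` with `M_{x,y} ≠ 0` (a vertex cover of the
support). -/
theorem half_rank_eq_min_vertex_cover {V : Type} [Fintype V] [DecidableEq V]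
    (Γ : SimpleGraph V) (hforest : Γ.IsAcyclic)
    (M : Matrix V V ℤ) (hM : M.transpose = -M)
    (hsupp : ∀ v w, ¬ Γ.Adj v w → M v w = 0) :
    ∃ k₀ : ℕ,
      IsLeast {k : ℕ | ∃ S : Finset V, S.card = k ∧
        ∀ v w, M v w ≠ 0 → v ∈ S ∨ w ∈ S} k₀ ∧
      2 * k₀ = (M.map (Int.cast : ℤ → ℚ)).rank := by
  classical
  set A : Matrix V V ℚ := M.map (Int.cast : ℤ → ℚ) with hA
  -- upper bound : for every vertex cover S, rank A ≤ 2 * S.card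
  have hupper : ∀ S : Finset V, (∀ v w, M v w ≠ 0 → v ∈ S ∨ w ∈ S) →
      A.rank ≤ 2 * S.card := by
    intro S hcov
    set d : V → ℚ := fun x => if x ∈ S then (1 : ℚ) else 0 with hd
    set D : Matrix V V ℚ := Matrix.diagonal d with hD
    have hDrank : D.rank = S.card := by
      rw [hD, Matrix.rank_diagonal]
      have hiff : ∀ i, (d i ≠ 0) ↔ i ∈ S := by
        intro i
        by_cases h : i ∈ S <;> simp [hd, h]
      calc Fintype.card {i // d i ≠ 0}
          = Fintype.card {i // i ∈ S} := Fintype.card_congr (Equiv.subtypeEquivRight hiff)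
        _ = S.card := Fintype.card_coe S
    set E : Matrix V V ℚ := A - D * A with hE
    have hAzero : ∀ x y, x ∉ S → y ∉ S → A x y = 0 := by
      intro x y hx hy
      have hMxy : M x y = 0 := by
        by_contra h
        rcases hcov x y h with h' | h'
        · exact hx h'
        · exact hy h'
      simp [hA, Matrix.map_apply, hMxy]
    have hEapply : ∀ x y, E x y = if x ∈ S then 0 else A x y := by
      intro x y
      rw [hE]
      by_cases h : x ∈ S <;>
        simp [Matrix.sub_apply, hD, Matrix.diagonal_mul, hd, h]
    have hED : E * D = E := by
      ext x y
      rw [hD, Matrix.mul_diagonal, hd]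
      by_cases hy : y ∈ S
      · simp [hd, hy]
      · show E x y * (if y ∈ S then (1 : ℚ) else 0) = E x y
        rw [if_neg hy, mul_zero, hEapply]
        by_cases hx : x ∈ S
        · rw [if_pos hx]
        · rw [if_neg hx, hAzero x y hx hy]
    have hsplit : A = D * A + E := by rw [hE]; abel
    have hadd : (D * A + E).rank ≤ (D * A).rank + E.rank := by
      rw [Matrix.rank, Matrix.rank, Matrix.rank]
      have h1 : (D * A + E).mulVecLin = (D * A).mulVecLin + E.mulVecLin := by
        ext x
        simp [Matrix.add_mulVec]
      rw [h1]
      have h2 : LinearMap.range ((D * A).mulVecLin + E.mulVecLin) ≤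
          LinearMap.range (D * A).mulVecLin ⊔ LinearMap.range E.mulVecLin := by
        rintro x ⟨y, rfl⟩
        exact Submodule.add_mem_sup (LinearMap.mem_range_self _ y) (LinearMap.mem_range_self _ y)
      exact le_trans (Submodule.finrank_mono h2)
        (Submodule.finrank_add_le_finrank_add_finrank _ _)
    have h3 : (D * A).rank ≤ D.rank := Matrix.rank_mul_le_left D A
    have h4 : E.rank ≤ D.rank := by
      conv_lhs => rw [← hED]
      exact Matrix.rank_mul_le_right E D
    calc A.rank = (D * A + E).rank := by rw [← hsplit]
      _ ≤ (D * A).rank + E.rank := hadd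
      _ ≤ D.rank + D.rank := add_le_add h3 h4
      _ = 2 * S.card := by rw [hDrank]; ring
  -- lower bound via the key induction
  obtain ⟨S₀, T₀, hcov₀, hST₀, hLI₀⟩ := key_induction Γ hforest
    ((Finset.univ.filter (fun p : V × V => M p.1 p.2 ≠ 0)).card) M hM hsupp le_rfl
  have hlower : T₀.card ≤ A.rank := by
    have hfam : LinearIndependent ℚ (fun t : {x // x ∈ T₀} => Aᵀ (t : V)) := by
      rw [Fintype.linearIndependent_iff]
      intro g hg
      set c : V → ℚ := fun x => if h : x ∈ T₀ then g ⟨x, h⟩ else 0 with hc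
      have hmain : ∀ i, ∑ t ∈ T₀, c t * (M i t : ℚ) = 0 := by
        intro i
        have h0 := congrFun hg i
        simp only [Finset.sum_apply, Pi.smul_apply, Pi.zero_apply, Matrix.transpose_apply,
          smul_eq_mul] at h0
        rw [← Finset.sum_attach T₀ (fun t => c t * (M i t : ℚ)), ← h0,
          Finset.univ_eq_attach]
        apply Finset.sum_congr rfl
        intro t _
        have hct : c ↑t = g t := by
          rw [hc]
          exact dif_pos t.2
        have hAt : A i ↑t = (M i ↑t : ℚ) := by simp [hA, Matrix.map_apply]
        rw [hct, hAt]
      have hz := hLI₀ c hmain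
      intro t
      have := hz ↑t t.2
      rw [hc] at this
      simpa [dif_pos t.2] using this
    have h1 : A.rank = finrank ℚ (Submodule.span ℚ (Set.range Aᵀ)) :=
      Matrix.rank_eq_finrank_span_cols A
    have h2 : finrank ℚ (Submodule.span ℚ
        (Set.range (fun t : {x // x ∈ T₀} => Aᵀ (t : V)))) = T₀.card := by
      rw [finrank_span_eq_card hfam, Fintype.card_coe]
    have h3 : Submodule.span ℚ (Set.range (fun t : {x // x ∈ T₀} => Aᵀ (t : V))) ≤
        Submodule.span ℚ (Set.range Aᵀ) :=
      Submodule.span_mono (by rintro x ⟨t, rfl⟩; exact ⟨↑t, rfl⟩)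
    have h4 := Submodule.finrank_mono h3
    omega
  refine ⟨S₀.card, ⟨⟨S₀, rfl, hcov₀⟩, ?_⟩, ?_⟩
  · rintro k ⟨S, rfl, hcov⟩
    have h1 := hupper S hcov
    omega
  · have h1 := hupper S₀ hcov₀
    omega
end
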